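/- arXiv:0805.4022 — 6 statements merged into one kernel-verified Lean document; each statement's English description precedes it below -/
import Mathlib

section
/- Let (a_i) be a sequence in ℓ_p for some 0 < p < 2, and for N ∈ ℕ let ã^N denote the sequence obtained by keeping the N largest entries of (a_i) in absolute value and setting all others to zero. Then ‖a - ã^N‖_{ℓ_2} ≤ C_p · N^{1/2 - 1/p} · ‖a‖_{ℓ_p} for a constant C_p depending only on p. -/
/-!
Let `ε` be the smallest modulus among the `N` kept entries. Then `N ε^p ≤ ‖a‖_p^p`, while every
discarded entry satisfies `|a_j|^2 = |a_j|^(2-p) |a_j|^p ≤ ε^(2-p) |a_j|^p`. Hence the squared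
`ℓ₂` tail is at most `ε^(2-p) ‖a‖_p^p ≤ (‖a‖_p^p / N)^((2-p)/p) ‖a‖_p^p = N^(1-2/p) ‖a‖_p^2`,
so the estimate holds with `C_p = 1`.
-/

open Finset

section

variable {ι : Type*}

theorem card_mul_le_tsum_of_le {f : ι → ℝ} (hf : Summable f) (hf0 : ∀ i, 0 ≤ f i)
    {S : Finset ι} {c : ℝ} (hc : ∀ i ∈ S, c ≤ f i) : #S * c ≤ ∑' i, f i :=
  calc #S * c = #S • c := (nsmul_eq_mul _ _).symm
    _ ≤ ∑ i ∈ S, f i := card_nsmul_le_sum S f c hc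
    _ ≤ ∑' i, f i := hf.sum_le_tsum S fun i _ => hf0 i

theorem sq_le_rpow_sub_mul_rpow {x ε p : ℝ} (hx : 0 ≤ x) (hxε : x ≤ ε) (hp2 : p ≤ 2) :
    x ^ 2 ≤ ε ^ (2 - p) * x ^ p := by
  have hsplit : x ^ 2 = x ^ (2 - p) * x ^ p := by
    rw [← Real.rpow_add' hx (by norm_num), sub_add_cancel, ← Real.rpow_natCast]
    norm_num
  rw [hsplit]
  gcongr

theorem tsum_sq_compl_le [DecidableEq ι] {f : ι → ℝ} {p ε : ℝ} (hp2 : p ≤ 2)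
    (hf0 : ∀ i, 0 ≤ f i) (hf : Summable fun i => f i ^ p) (S : Finset ι) (hε0 : 0 ≤ ε)
    (hε : ∀ i ∉ S, f i ≤ ε) :
    ∑' i, (if i ∈ S then 0 else f i ^ 2) ≤ ε ^ (2 - p) * ∑' i, f i ^ p := by
  have hle : ∀ i, (if i ∈ S then 0 else f i ^ 2) ≤ ε ^ (2 - p) * f i ^ p := by
    intro i
    have := hf0 i
    split_ifs with hi
    · positivity
    · exact sq_le_rpow_sub_mul_rpow (hf0 i) (hε i hi) hp2
  have hmaj : Summable fun i => ε ^ (2 - p) * f i ^ p := hf.mul_left _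
  rw [← tsum_mul_left]
  exact (hmaj.of_nonneg_of_le (fun i => by have := hf0 i; positivity) hle).tsum_le_tsum hle hmaj

end

theorem rpow_sub_mul_le_of_mul_rpow_le {N ε T p : ℝ} (hN : 0 < N) (hε : 0 ≤ ε) (hp : 0 < p)
    (hp2 : p ≤ 2) (h : N * ε ^ p ≤ T) :
    ε ^ (2 - p) * T ≤ (N ^ ((1:ℝ)/2 - 1/p) * T ^ ((1:ℝ)/p)) ^ 2 := by
  have hT : 0 ≤ T := le_trans (by positivity) h
  have hεT : ε ^ (2 - p) ≤ (T / N) ^ ((2 - p) / p) := by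
    rw [show ε ^ (2 - p) = (ε ^ p) ^ ((2 - p) / p) by
      rw [← Real.rpow_mul hε]; congr 1; field_simp]
    gcongr
    rwa [le_div_iff₀ hN, mul_comm]
  calc ε ^ (2 - p) * T ≤ (T / N) ^ ((2 - p) / p) * T := by gcongr
    _ = (N ^ ((1:ℝ)/2 - 1/p) * T ^ ((1:ℝ)/p)) ^ 2 := by
      rw [mul_pow, ← Real.rpow_natCast, ← Real.rpow_natCast, ← Real.rpow_mul hN.le,
        ← Real.rpow_mul hT, Real.div_rpow hT hN.le, Nat.cast_ofNat,
        show ((1:ℝ)/2 - 1/p) * 2 = -((2 - p)/p) by field_simp; ring,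
        show (1/p : ℝ) * 2 = (2 - p)/p + 1 by field_simp; ring,
        Real.rpow_neg hN.le, Real.rpow_add' hT (by positivity), Real.rpow_one]
      ring

/-- Jackson-type direct estimate for best `N`-term approximation in `ℓ₂` of an
`ℓ_p` sequence, `0 < p < 2`.  The set `S` consists of (indices of) the `N`
largest entries of `a` in absolute value; the approximant keeps those entries
and sets everything else to zero. -/
theorem stmt1 (p : ℝ) (hp : 0 < p) (hp2 : p < 2) :
    ∃ C > 0, ∀ (a : ℕ → ℂ), Summable (fun i => ‖a i‖ ^ p) →
      ∀ (N : ℕ), 1 ≤ N → ∀ (S : Finset ℕ), S.card = N →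
        (∀ i ∈ S, ∀ j ∉ S, ‖a j‖ ≤ ‖a i‖) →
        (∑' i : ℕ, (if i ∈ S then 0 else ‖a i‖ ^ 2)) ^ ((1:ℝ)/2) ≤
          C * (N : ℝ) ^ ((1:ℝ)/2 - 1/p) * (∑' i : ℕ, ‖a i‖ ^ p) ^ ((1:ℝ)/p) := by
  refine ⟨1, one_pos, fun a ha N hN S hS hmax => ?_⟩
  obtain ⟨i₀, hi₀S, hi₀⟩ := S.exists_min_image (fun i => ‖a i‖) (card_pos.mp (by omega))
  have hhead : (N : ℝ) * ‖a i₀‖ ^ p ≤ ∑' i, ‖a i‖ ^ p := by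
    rw [← hS]
    exact card_mul_le_tsum_of_le ha (fun i => by positivity)
      fun i hi => Real.rpow_le_rpow (norm_nonneg _) (hi₀ i hi) hp.le
  have htail := tsum_sq_compl_le hp2.le (fun i => norm_nonneg (a i)) ha S (norm_nonneg _)
    (hmax i₀ hi₀S)
  rw [one_mul, ← Real.sqrt_eq_rpow, Real.sqrt_le_iff]
  exact ⟨by positivity, htail.trans <|
    rpow_sub_mul_le_of_mul_rpow_le (by exact_mod_cast hN) (norm_nonneg _) hp hp2.le hhead⟩
end

section
/- For every integers m ≥ 0 and n ≥ 1 there exists C_{m,n} > 0 such that for all k > 0 and all x with 0 < kx < 1, |(d/dx)^m [e^{-ikx} H_n^{(1)}(kx)]| ≤ C_{m,n} (kx)^{-n} x^{-m}. -/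
/-! For `0 < re w`, Watson's integral continues `w ↦ e^{-iw} H^{(1)}_n(w)` to a holomorphic
function `K` on the right half-plane. Since `|1 + iu/(2w)| ≤ (2|w| + u)/(2|w|)`, the integral is
`O(|w|^{1/2-n})` for bounded `w`, and with the prefactor `(2/(πw))^{1/2}` this gives
`|K w| ≤ A |w|^{-n}` for `|w| ≤ 2`. On the circle of radius `z/2` about `z = kx` this reads
`|K| ≤ A (z/2)^{-n}`, so Cauchy's estimate bounds `K^{(m)}(z)` by `m! A (z/2)^{-n-m}`, and the
chain rule `(d/dx)^m K(kx) = k^m K^{(m)}(kx)` turns `k^m z^{-m}` into `x^{-m}`. -/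

open MeasureTheory

/-- The Hankel function of the first kind of order `n`, for positive real
argument, via Watson's contour integral representation
`H_n^{(1)}(z) = (2/(πz))^{1/2} e^{i(z - nπ/2 - π/4)} / Γ(n-1/2)
  · ∫_0^∞ e^{-u} u^{n-1/2} (1 + iu/(2z))^{n-1/2} du`. -/
noncomputable def hankelH1 (n : ℕ) (z : ℝ) : ℂ :=
  ((2 : ℂ) / ((Real.pi : ℂ) * (z : ℂ))) ^ ((1:ℂ)/2) *
    Complex.exp (Complex.I * ((z : ℂ) - (n : ℂ) * (Real.pi : ℂ) / 2 - (Real.pi : ℂ) / 4)) /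
    Complex.Gamma ((n : ℂ) - 1/2) *
    ∫ u in Set.Ioi (0:ℝ),
      Complex.exp (-(u : ℂ)) * (u : ℂ) ^ ((n : ℂ) - 1/2) *
        (1 + Complex.I * (u : ℂ) / (2 * (z : ℂ))) ^ ((n : ℂ) - 1/2)

open Set Metric Complex
open scoped Real Topology Nat

lemma re_ge_and_norm_le_of_norm_sub_le {v w : ℂ} {δ : ℝ} (h : ‖v - w‖ ≤ δ) :
    w.re - δ ≤ v.re ∧ ‖v‖ ≤ ‖w‖ + δ := by
  have hre : w.re - v.re ≤ ‖v - w‖ := by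
    simpa using (abs_re_le_norm (v - w)).trans' (neg_le_abs _)
  exact ⟨by linarith, by linarith [norm_le_norm_add_norm_sub' v w]⟩

lemma Real.add_rpow_le_two_rpow_mul {a b p : ℝ} (ha : 0 ≤ a) (hb : 0 ≤ b) (hp : 0 ≤ p) :
    (a + b) ^ p ≤ 2 ^ p * (a ^ p + b ^ p) := calc
  (a + b) ^ p ≤ (2 * max a b) ^ p := by
    gcongr; linarith [le_max_left a b, le_max_right a b]
  _ = 2 ^ p * max (a ^ p) (b ^ p) := by
    rw [Real.mul_rpow zero_le_two (le_max_of_le_left ha)]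
    rcases le_total a b with h | h
    · rw [max_eq_right h, max_eq_right (Real.rpow_le_rpow ha h hp)]
    · rw [max_eq_left h, max_eq_left (Real.rpow_le_rpow hb h hp)]
  _ ≤ 2 ^ p * (a ^ p + b ^ p) := by
    gcongr; exact max_le_add_of_nonneg (by positivity) (by positivity)

lemma integrableOn_exp_neg_mul_rpow_mul_add_rpow {σ c : ℝ} (hσ : 0 ≤ σ) (hc : 0 ≤ c) :
    IntegrableOn (fun u : ℝ => Real.exp (-u) * u ^ σ * (c + u) ^ σ) (Ioi 0) := by
  have hΓ (t : ℝ) (ht : 0 ≤ t) : IntegrableOn (fun u : ℝ => Real.exp (-u) * u ^ t) (Ioi 0) := by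
    simpa using Real.GammaIntegral_convergent (s := t + 1) (by linarith)
  refine (((hΓ σ hσ).const_mul (2 ^ σ * c ^ σ)).add
    ((hΓ (σ + σ) (by linarith)).const_mul (2 ^ σ))).mono' ?_ ?_
  · refine ContinuousOn.aestronglyMeasurable ?_ measurableSet_Ioi
    exact ((Real.continuous_exp.comp continuous_neg).continuousOn.mul
      (continuousOn_id.rpow_const fun _ _ => Or.inr hσ)).mul
      ((continuousOn_const.add continuousOn_id).rpow_const fun _ _ => Or.inr hσ)
  · refine (ae_restrict_iff' measurableSet_Ioi).2 (Filter.Eventually.of_forall fun u hu => ?_)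
    have hu : 0 < u := hu
    rw [Real.norm_of_nonneg (by positivity)]
    calc Real.exp (-u) * u ^ σ * (c + u) ^ σ
        ≤ Real.exp (-u) * u ^ σ * (2 ^ σ * (c ^ σ + u ^ σ)) := by
          gcongr; exact Real.add_rpow_le_two_rpow_mul hc hu.le hσ
      _ = _ := by simp only [Pi.add_apply]; rw [Real.rpow_add hu]; ring

noncomputable def watsonIntegrand (σ : ℝ) (w : ℂ) (u : ℝ) : ℂ :=
  cexp (-u) * (u : ℂ) ^ (σ : ℂ) * (1 + I * u / (2 * w)) ^ (σ : ℂ)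

noncomputable def watsonIntegrandDeriv (σ : ℝ) (w : ℂ) (u : ℝ) : ℂ :=
  cexp (-u) * (u : ℂ) ^ (σ : ℂ) *
    (σ * (1 + I * u / (2 * w)) ^ ((σ : ℂ) - 1) * (-(I * u) / (2 * w ^ 2)))

noncomputable def watsonIntegral (σ : ℝ) (w : ℂ) : ℂ :=
  ∫ u in Ioi (0 : ℝ), watsonIntegrand σ w u

section WatsonIntegrand

variable {σ u : ℝ} {w : ℂ}

lemma im_one_add_I_mul_div (u : ℝ) (w : ℂ) :
    (1 + I * u / (2 * w)).im = u * w.re / (2 * ‖w‖ ^ 2) := by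
  simp only [add_im, one_im, div_im, mul_im, I_re, ofReal_im, mul_zero, I_im, ofReal_re, one_mul,
    zero_add, mul_re, re_ofNat, im_ofNat, zero_mul, sub_zero, normSq_mul, normSq_ofNat, sub_self,
    add_zero, zero_div, ← normSq_eq_norm_sq]
  ring

lemma one_add_I_mul_div_mem_slitPlane (hu : 0 < u) (hw : 0 < w.re) :
    1 + I * u / (2 * w) ∈ slitPlane := by
  have : 0 < ‖w‖ := hw.trans_le (re_le_norm w)
  refine mem_slitPlane_iff.2 (Or.inr (ne_of_gt ?_))
  rw [im_one_add_I_mul_div]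
  positivity

lemma norm_one_add_I_mul_div_le (hu : 0 ≤ u) (hw : w ≠ 0) :
    ‖1 + I * u / (2 * w)‖ ≤ (2 * ‖w‖ + u) / (2 * ‖w‖) := by
  have : 0 < ‖w‖ := norm_pos_iff.2 hw
  calc ‖1 + I * u / (2 * w)‖ ≤ 1 + ‖I * u / (2 * w)‖ := by
        simpa using norm_add_le 1 (I * u / (2 * w))
    _ = (2 * ‖w‖ + u) / (2 * ‖w‖) := by
      simp only [norm_div, norm_mul, norm_I, norm_real, Real.norm_eq_abs, abs_of_nonneg hu, one_mul,
        norm_ofNat]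
      field_simp

lemma norm_watsonIntegrand (hu : 0 < u) :
    ‖watsonIntegrand σ w u‖ = Real.exp (-u) * u ^ σ * ‖1 + I * u / (2 * w)‖ ^ σ := by
  simp only [watsonIntegrand, norm_mul, norm_cpow_real, norm_exp, norm_real,
    Real.norm_of_nonneg hu.le, ← ofReal_neg, ofReal_re]

lemma norm_watsonIntegrand_le {R : ℝ} (hσ : 0 ≤ σ) (hu : 0 < u) (hw : w ≠ 0) (hR : ‖w‖ ≤ R) :
    ‖watsonIntegrand σ w u‖ ≤ (2 * ‖w‖) ^ (-σ) * (Real.exp (-u) * u ^ σ * (2 * R + u) ^ σ) := by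
  have hw' : 0 < 2 * ‖w‖ := by positivity
  have hbase : ‖1 + I * u / (2 * w)‖ ^ σ ≤ (2 * ‖w‖) ^ (-σ) * (2 * R + u) ^ σ := calc
    _ ≤ ((2 * ‖w‖ + u) / (2 * ‖w‖)) ^ σ := by gcongr; exact norm_one_add_I_mul_div_le hu.le hw
    _ = (2 * ‖w‖) ^ (-σ) * (2 * ‖w‖ + u) ^ σ := by
      rw [Real.div_rpow (by positivity) hw'.le, Real.rpow_neg hw'.le, div_eq_inv_mul]
    _ ≤ (2 * ‖w‖) ^ (-σ) * (2 * R + u) ^ σ := by gcongr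
  rw [norm_watsonIntegrand hu]
  calc _ ≤ Real.exp (-u) * u ^ σ * ((2 * ‖w‖) ^ (-σ) * (2 * R + u) ^ σ) := by gcongr
    _ = _ := by ring

lemma continuousOn_watsonIntegrand (hw : 0 < w.re) :
    ContinuousOn (watsonIntegrand σ w) (Ioi 0) := fun u (hu : 0 < u) =>
  ContinuousAt.continuousWithinAt <| by
    unfold watsonIntegrand
    fun_prop (disch := first
      | exact ofReal_mem_slitPlane.2 hu
      | exact one_add_I_mul_div_mem_slitPlane hu hw)

lemma continuousOn_watsonIntegrandDeriv (hw : 0 < w.re) :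
    ContinuousOn (watsonIntegrandDeriv σ w) (Ioi 0) := fun u (hu : 0 < u) =>
  ContinuousAt.continuousWithinAt <| by
    unfold watsonIntegrandDeriv
    fun_prop (disch := first
      | exact ofReal_mem_slitPlane.2 hu
      | exact one_add_I_mul_div_mem_slitPlane hu hw)

lemma integrableOn_watsonIntegrand (hσ : 0 ≤ σ) (hw : 0 < w.re) :
    IntegrableOn (watsonIntegrand σ w) (Ioi 0) := by
  refine ((integrableOn_exp_neg_mul_rpow_mul_add_rpow hσ (by positivity : 0 ≤ 2 * ‖w‖)).const_mul
    ((2 * ‖w‖) ^ (-σ))).mono'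
    ((continuousOn_watsonIntegrand hw).aestronglyMeasurable measurableSet_Ioi) ?_
  exact (ae_restrict_iff' measurableSet_Ioi).2 (Filter.Eventually.of_forall fun u hu =>
    norm_watsonIntegrand_le hσ hu (ne_zero_of_re_pos hw) le_rfl)

lemma hasDerivAt_watsonIntegrand (hu : 0 < u) (hw : 0 < w.re) :
    HasDerivAt (fun w => watsonIntegrand σ w u) (watsonIntegrandDeriv σ w u) w := by
  have hw0 : w ≠ 0 := ne_zero_of_re_pos hw
  have hinner : HasDerivAt (fun w : ℂ => 1 + I * u / (2 * w)) (-(I * u) / (2 * w ^ 2)) w := by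
    have hfun : (fun w : ℂ => 1 + I * u / (2 * w)) = fun w => 1 + I * u / 2 * w⁻¹ := by
      funext w; ring
    rw [hfun]
    exact (((hasDerivAt_inv hw0).const_mul (I * u / 2)).const_add 1).congr_deriv (by ring)
  exact (hinner.cpow_const (one_add_I_mul_div_mem_slitPlane hu hw)).const_mul _

lemma norm_watsonIntegrandDeriv_le (hσ : 0 ≤ σ) (hu : 0 < u) (hw : 0 < w.re) :
    ‖watsonIntegrandDeriv σ w u‖ ≤ σ / w.re * ‖watsonIntegrand σ w u‖ := by
  set b := 1 + I * u / (2 * w)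
  have hw' : 0 < ‖w‖ := hw.trans_le (re_le_norm w)
  have hb : 0 < ‖b‖ := norm_pos_iff.2 (slitPlane_ne_zero (one_add_I_mul_div_mem_slitPlane hu hw))
  -- `‖b‖ ≥ Im b` absorbs the factor `u` produced by differentiating `b` in `w`
  have him : u / (2 * ‖w‖ ^ 2) ≤ ‖b‖ / w.re := by
    rw [le_div_iff₀ hw, div_mul_eq_mul_div, ← im_one_add_I_mul_div]
    exact im_le_norm b
  rw [norm_watsonIntegrand hu]
  have hexp : (σ : ℂ) - 1 = ((σ - 1 : ℝ) : ℂ) := by push_cast; ring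
  simp only [watsonIntegrandDeriv, norm_mul, norm_div, norm_neg, hexp, norm_cpow_real, norm_exp,
    norm_real, Real.norm_of_nonneg hu.le, Real.norm_of_nonneg hσ, ← ofReal_neg, ofReal_re, norm_I,
    norm_pow, Complex.norm_two]
  rw [Real.rpow_sub_one hb.ne']
  calc Real.exp (-u) * u ^ σ * (σ * (‖b‖ ^ σ / ‖b‖) * (1 * u / (2 * ‖w‖ ^ 2)))
      ≤ Real.exp (-u) * u ^ σ * (σ * (‖b‖ ^ σ / ‖b‖) * (‖b‖ / w.re)) := by
        rw [one_mul]; gcongr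
    _ = σ / w.re * (Real.exp (-u) * u ^ σ * ‖b‖ ^ σ) := by field_simp

lemma differentiableAt_watsonIntegral (hσ : 0 ≤ σ) (hw : 0 < w.re) :
    DifferentiableAt ℂ (watsonIntegral σ) w := by
  set δ := w.re / 2 with hδ_def
  set R := ‖w‖ + δ
  have hδ : 0 < δ := by positivity
  have hball (v : ℂ) (hv : v ∈ ball w δ) : δ ≤ v.re ∧ δ ≤ ‖v‖ ∧ ‖v‖ ≤ R := by
    obtain ⟨hre, hnorm⟩ := re_ge_and_norm_le_of_norm_sub_le (mem_ball_iff_norm.1 hv).le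
    have : δ ≤ v.re := by linarith [hδ_def]
    exact ⟨this, this.trans (re_le_norm v), hnorm⟩
  have hderiv := hasDerivAt_integral_of_dominated_loc_of_deriv_le (μ := volume.restrict (Ioi 0))
    (F := watsonIntegrand σ) (F' := watsonIntegrandDeriv σ)
    (bound := fun u => σ / δ * ((2 * δ) ^ (-σ) * (Real.exp (-u) * u ^ σ * (2 * R + u) ^ σ)))
    (ball_mem_nhds w hδ)
    (Filter.eventually_of_mem (ball_mem_nhds w hδ) fun v hv =>
      (continuousOn_watsonIntegrand (hδ.trans_le (hball v hv).1)).aestronglyMeasurable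
        measurableSet_Ioi)
    (integrableOn_watsonIntegrand hσ hw)
    ((continuousOn_watsonIntegrandDeriv hw).aestronglyMeasurable measurableSet_Ioi)
    ((ae_restrict_iff' measurableSet_Ioi).2 (Filter.Eventually.of_forall fun u hu v hv => ?_))
    (((integrableOn_exp_neg_mul_rpow_mul_add_rpow hσ (by positivity)).const_mul _).const_mul _)
    ((ae_restrict_iff' measurableSet_Ioi).2 (Filter.Eventually.of_forall fun u hu v hv =>
      hasDerivAt_watsonIntegrand hu (hδ.trans_le (hball v hv).1)))
  · exact hderiv.2.differentiableAt
  replace hu : 0 < u := hu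
  obtain ⟨hre, hδv, hvR⟩ := hball v hv
  have hv0 : v ≠ 0 := norm_pos_iff.1 (hδ.trans_le hδv)
  calc ‖watsonIntegrandDeriv σ v u‖ ≤ σ / v.re * ‖watsonIntegrand σ v u‖ :=
        norm_watsonIntegrandDeriv_le hσ hu (hδ.trans_le hre)
    _ ≤ σ / δ * ((2 * ‖v‖) ^ (-σ) * (Real.exp (-u) * u ^ σ * (2 * R + u) ^ σ)) := by
        gcongr
        exact norm_watsonIntegrand_le hσ hu hv0 hvR
    _ ≤ _ := by
        gcongr σ / δ * (?_ * _)
        exact Real.rpow_le_rpow_of_nonpos (x := 2 * δ) (by positivity) (by linarith)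
          (neg_nonpos.2 hσ)

lemma norm_watsonIntegral_le {R : ℝ} (hσ : 0 ≤ σ) (hw : 0 < w.re) (hR : ‖w‖ ≤ R) :
    ‖watsonIntegral σ w‖ ≤
      (2 * ‖w‖) ^ (-σ) * ∫ u in Ioi (0 : ℝ), Real.exp (-u) * u ^ σ * (2 * R + u) ^ σ := by
  have hw0 : w ≠ 0 := ne_zero_of_re_pos hw
  have hR0 : 0 ≤ 2 * R := by linarith [norm_nonneg w]
  rw [← integral_const_mul]
  refine norm_integral_le_of_norm_le
    ((integrableOn_exp_neg_mul_rpow_mul_add_rpow hσ hR0).const_mul _) ?_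
  exact (ae_restrict_iff' measurableSet_Ioi).2 (Filter.Eventually.of_forall fun u hu =>
    norm_watsonIntegrand_le hσ hu hw0 hR)

end WatsonIntegrand

/-- `w ↦ e^{-iw} H^{(1)}_ν(w)`, continued holomorphically to `0 < re w` by Watson's integral. -/
noncomputable def hankelH1Envelope (ν : ℝ) (w : ℂ) : ℂ :=
  (2 / (π * w)) ^ (1 / 2 : ℂ) * cexp (I * (-ν * π / 2 - π / 4)) / Gamma (ν - 1 / 2) *
    watsonIntegral (ν - 1 / 2) w

lemma exp_neg_I_mul_mul_hankelH1 (n : ℕ) (z : ℝ) :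
    cexp (-I * z) * hankelH1 n z = hankelH1Envelope n z := by
  have hexp : cexp (-I * z) * cexp (I * (z - n * π / 2 - π / 4)) =
      cexp (I * (-n * π / 2 - π / 4)) := by
    rw [← exp_add]; ring_nf
  simp only [hankelH1Envelope, hankelH1, watsonIntegral, watsonIntegrand]
  push_cast
  rw [← hexp]
  ring

lemma differentiableOn_hankelH1Envelope {ν : ℝ} (hν : 1 / 2 ≤ ν) :
    DifferentiableOn ℂ (hankelH1Envelope ν) {w | 0 < w.re} := by
  intro w hw
  have hw : 0 < w.re := hw
  have hw0 : w ≠ 0 := ne_zero_of_re_pos hw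
  have hslit : 2 / (π * w) ∈ slitPlane := by
    refine mem_slitPlane_iff.2 (Or.inl ?_)
    have hsq : 0 < normSq w := normSq_pos.2 hw0
    rw [show 2 / (π * w) = ((2 / π : ℝ) : ℂ) * w⁻¹ by push_cast; field_simp, re_ofReal_mul, inv_re]
    positivity
  refine DifferentiableAt.differentiableWithinAt ?_
  unfold hankelH1Envelope
  refine ((((differentiableAt_const _).div (by fun_prop) (by simp [hw0, Real.pi_ne_zero])).cpow
    (differentiableAt_const _) hslit).mul_const _ |>.div_const _).mul
    (differentiableAt_watsonIntegral (by linarith) hw)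

lemma norm_two_div_pi_mul_cpow_half {w : ℂ} (hw : w ≠ 0) :
    ‖(2 / (π * w)) ^ (1 / 2 : ℂ)‖ = (2 / π) ^ (1 / 2 : ℝ) * ‖w‖ ^ (-(1 / 2) : ℝ) := by
  have hw' : 0 < ‖w‖ := norm_pos_iff.2 hw
  rw [show (1 / 2 : ℂ) = ((1 / 2 : ℝ) : ℂ) by push_cast; ring, norm_cpow_real, norm_div,
    norm_mul, norm_real, Real.norm_of_nonneg Real.pi_pos.le, Complex.norm_two,
    div_mul_eq_div_div, Real.div_rpow (by positivity) hw'.le, Real.rpow_neg hw'.le, div_eq_mul_inv]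

lemma exists_norm_hankelH1Envelope_le {ν : ℝ} (hν : 1 / 2 ≤ ν) (R : ℝ) :
    ∃ A > 0, ∀ w : ℂ, 0 < w.re → ‖w‖ ≤ R → ‖hankelH1Envelope ν w‖ ≤ A * ‖w‖ ^ (-ν) := by
  set σ := ν - 1 / 2
  have hσ : 0 ≤ σ := sub_nonneg.2 hν
  set c := ‖cexp (I * (-ν * π / 2 - π / 4))‖ / ‖Gamma (ν - 1 / 2)‖
  set J := ∫ u in Ioi (0 : ℝ), Real.exp (-u) * u ^ σ * (2 * R + u) ^ σ
  set A := (2 / π) ^ (1 / 2 : ℝ) * c * 2 ^ (-σ) * J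
  refine ⟨max A 1, by positivity, fun w hw hR => ?_⟩
  have hw0 : w ≠ 0 := ne_zero_of_re_pos hw
  have hw' : 0 < ‖w‖ := norm_pos_iff.2 hw0
  have hJ : 0 ≤ J := setIntegral_nonneg measurableSet_Ioi fun u (hu : 0 < u) => by
    have : 0 ≤ 2 * R := by linarith
    positivity
  calc ‖hankelH1Envelope ν w‖
      = (2 / π) ^ (1 / 2 : ℝ) * ‖w‖ ^ (-(1 / 2) : ℝ) * c * ‖watsonIntegral σ w‖ := by
        rw [hankelH1Envelope, norm_mul, norm_div, norm_mul, norm_two_div_pi_mul_cpow_half hw0]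
        ring
    _ ≤ (2 / π) ^ (1 / 2 : ℝ) * ‖w‖ ^ (-(1 / 2) : ℝ) * c * ((2 * ‖w‖) ^ (-σ) * J) := by
        gcongr
        exact norm_watsonIntegral_le hσ hw hR
    _ = A * ‖w‖ ^ (-ν) := by
        rw [Real.mul_rpow zero_le_two hw'.le, show -ν = -(1 / 2) + -σ by ring,
          Real.rpow_add hw']
        ring
    _ ≤ max A 1 * ‖w‖ ^ (-ν) := by gcongr; exact le_max_left A 1

lemma iteratedDeriv_comp_ofReal_mul {f : ℂ → ℂ} {U : Set ℂ} (hU : IsOpen U)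
    (hf : DifferentiableOn ℂ f U) (c : ℂ) (m : ℕ) {y : ℝ} (hy : c * y ∈ U) :
    iteratedDeriv m (fun t : ℝ => f (c * t)) y = c ^ m * iteratedDeriv m f (c * y) := by
  induction m generalizing y with
  | zero => simp
  | succ m ih =>
    have hpre : IsOpen {t : ℝ | c * t ∈ U} := hU.preimage (by fun_prop)
    have heq : iteratedDeriv m (fun t : ℝ => f (c * t)) =ᶠ[𝓝 y]
        fun t : ℝ => c ^ m * iteratedDeriv m f (c * t) :=
      Filter.eventually_of_mem (hpre.mem_nhds hy) fun t ht => ih ht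
    have hdiff : DifferentiableAt ℂ (iteratedDeriv m f) (c * y) := by
      rw [iteratedDeriv_eq_iterate]
      exact ((hf.analyticOnNhd hU).iterated_deriv m _ hy).differentiableAt
    have hderiv := ((hdiff.hasDerivAt.comp (y : ℂ)
      ((hasDerivAt_id (y : ℂ)).const_mul c)).comp_ofReal).const_mul (c ^ m)
    rw [iteratedDeriv_succ, iteratedDeriv_succ, heq.deriv_eq]
    exact hderiv.deriv.trans (by ring)

lemma norm_iteratedDeriv_le_of_norm_le_rpow {f : ℂ → ℂ} {A ν R : ℝ}
    (hf : DifferentiableOn ℂ f {w | 0 < w.re}) (hA : 0 ≤ A) (hν : 0 ≤ ν)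
    (hbound : ∀ w : ℂ, 0 < w.re → ‖w‖ ≤ R → ‖f w‖ ≤ A * ‖w‖ ^ (-ν))
    (m : ℕ) {z : ℝ} (hz : 0 < z) (hzR : 2 * z ≤ R) :
    ‖iteratedDeriv m f z‖ ≤ m ! * 2 ^ ν * 2 ^ m * A * z ^ (-ν) / z ^ m := by
  have hr : 0 < z / 2 := by positivity
  have hsphere (w : ℂ) (hw : ‖w - z‖ ≤ z / 2) : z / 2 ≤ w.re ∧ z / 2 ≤ ‖w‖ ∧ ‖w‖ ≤ R := by
    obtain ⟨hre, hnorm⟩ := re_ge_and_norm_le_of_norm_sub_le hw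
    rw [ofReal_re] at hre
    rw [norm_real, Real.norm_of_nonneg hz.le] at hnorm
    exact ⟨by linarith, by linarith [re_le_norm w], by linarith⟩
  have hcl : closedBall (z : ℂ) (z / 2) ⊆ {w | 0 < w.re} := fun w hw =>
    hr.trans_le (hsphere w (mem_closedBall_iff_norm.1 hw)).1
  have hM (w : ℂ) (hw : w ∈ sphere (z : ℂ) (z / 2)) : ‖f w‖ ≤ A * (z / 2) ^ (-ν) := by
    obtain ⟨hre, hlow, hup⟩ := hsphere w (mem_sphere_iff_norm.1 hw).le
    calc ‖f w‖ ≤ A * ‖w‖ ^ (-ν) := hbound w (hr.trans_le hre) hup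
      _ ≤ A * (z / 2) ^ (-ν) := by
        gcongr A * ?_
        exact Real.rpow_le_rpow_of_nonpos hr hlow (neg_nonpos.2 hν)
  calc ‖iteratedDeriv m f z‖ ≤ m ! * (A * (z / 2) ^ (-ν)) / (z / 2) ^ m :=
        norm_iteratedDeriv_le_of_forall_mem_sphere_norm_le m hr (hf.diffContOnCl_ball hcl) hM
    _ = m ! * 2 ^ ν * 2 ^ m * A * z ^ (-ν) / z ^ m := by
        rw [Real.div_rpow hz.le zero_le_two, Real.rpow_neg zero_le_two, div_pow]
        field_simp

lemma iteratedDeriv_exp_neg_I_mul_mul_hankelH1 (m : ℕ) {n : ℕ} (hn : (1 / 2 : ℝ) ≤ n) {k x : ℝ}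
    (hkx : 0 < k * x) :
    iteratedDeriv m (fun y : ℝ => cexp (-I * k * y) * hankelH1 n (k * y)) x =
      k ^ m * iteratedDeriv m (hankelH1Envelope n) (k * x : ℝ) := by
  have hfun : (fun y : ℝ => cexp (-I * k * y) * hankelH1 n (k * y)) =
      fun y : ℝ => hankelH1Envelope n (k * y) := by
    funext y
    rw [mul_assoc (-I), ← ofReal_mul, exp_neg_I_mul_mul_hankelH1, ofReal_mul]
  have hre : 0 < ((k : ℂ) * x).re := by rwa [← ofReal_mul, ofReal_re]
  rw [hfun, iteratedDeriv_comp_ofReal_mul (isOpen_lt continuous_const continuous_re)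
    (differentiableOn_hankelH1Envelope hn) k m hre, ofReal_mul]

/-- Near-origin smoothness estimate for the non-oscillatory part of the Hankel
kernel: for `n ≥ 1`, `0 < kx < 1`,
`|(d/dx)^m [e^{-ikx} H_n^{(1)}(kx)]| ≤ C_{m,n} (kx)^{-n} x^{-m}`, uniformly in `k`. -/
theorem stmt5 (m n : ℕ) (hn : 1 ≤ n) :
    ∃ C > 0, ∀ k x : ℝ, 0 < k → 0 < k * x → k * x < 1 →
      ‖iteratedDeriv m (fun y : ℝ =>
          Complex.exp (-Complex.I * (k : ℂ) * (y : ℂ)) * hankelH1 n (k * y)) x‖ ≤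
        C * (k * x) ^ (-(n : ℝ)) * x ^ (-(m : ℝ)) := by
  have hν : (1 / 2 : ℝ) ≤ n := by
    have : (1 : ℝ) ≤ n := by exact_mod_cast hn
    linarith
  obtain ⟨A, hA, hbound⟩ := exists_norm_hankelH1Envelope_le hν 2
  refine ⟨m ! * 2 ^ (n : ℝ) * 2 ^ m * A, by positivity, fun k x hk hz hz1 => ?_⟩
  have hx : 0 < x := pos_of_mul_pos_right hz hk.le
  rw [iteratedDeriv_exp_neg_I_mul_mul_hankelH1 m hν hz, norm_mul, norm_pow, norm_real,
    Real.norm_of_nonneg hk.le]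
  calc k ^ m * ‖iteratedDeriv m (hankelH1Envelope n) (k * x : ℝ)‖
      ≤ k ^ m * (m ! * 2 ^ (n : ℝ) * 2 ^ m * A * (k * x) ^ (-(n : ℝ)) / (k * x) ^ m) := by
        gcongr
        exact norm_iteratedDeriv_le_of_norm_le_rpow (differentiableOn_hankelH1Envelope hν) hA.le
          (by positivity) hbound m hz (by linarith)
    _ = m ! * 2 ^ (n : ℝ) * 2 ^ m * A * (k * x) ^ (-(n : ℝ)) * x ^ (-(m : ℝ)) := by
        rw [Real.rpow_neg hx.le, Real.rpow_natCast x m, mul_pow]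
        field_simp
end

section
/- Define I(z) = ∫_0^∞ e^{-u} u^{-1/2} (1 + iu/(2z))^{-1/2} du for real z with 0 < z ≤ 1. Then |I(z)| ≤ C (z^{1/2} + z^{1/2} |log z|) for an absolute constant C. -/
/-!
Since `1 + iu/(2z)` has real part `1` and imaginary part `u/(2z)`, its modulus is at least
`max 1 (u/(2z))`. Hence the integrand is bounded by `u^{-1/2}` for `u ≤ z` and by
`√(2z) e^{-u}/u` for `u > z`; bounding `e^{-u}/u` further by `1/u` on `(z, 1]` and by `e^{-u}`
on `(1, ∞)` gives an integrable majorant with integral `2√z + √(2z) (-log z + e^{-1})`.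
-/

open MeasureTheory Set Real

noncomputable def hankelIntegrand (z u : ℝ) : ℂ :=
  Complex.exp (-(u : ℂ)) * (u : ℂ) ^ (-(1:ℂ)/2) *
    (1 + Complex.I * (u : ℂ) / (2 * (z : ℂ))) ^ (-(1:ℂ)/2)

lemma one_add_I_mul_div_eq (z u : ℝ) :
    1 + Complex.I * (u : ℂ) / (2 * (z : ℂ)) = ⟨1, u / (2 * z)⟩ := by
  apply Complex.ext <;> simp [Complex.div_re, Complex.div_im, Complex.normSq_apply]
  field_simp

lemma norm_hankelIntegrand_le {z u a : ℝ} (hu : 0 < u) (ha : 0 < a)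
    (haw : a ≤ ‖(⟨1, u / (2 * z)⟩ : ℂ)‖) :
    ‖hankelIntegrand z u‖ ≤ exp (-u) * u ^ (-(1:ℝ)/2) * a ^ (-(1:ℝ)/2) := by
  have hw : (⟨1, u / (2 * z)⟩ : ℂ) ≠ 0 := fun h => by simpa using congrArg Complex.re h
  rw [hankelIntegrand, one_add_I_mul_div_eq, norm_mul, norm_mul, Complex.norm_exp,
    Complex.norm_cpow_eq_rpow_re_of_pos hu, Complex.norm_cpow_of_ne_zero hw]
  norm_num
  exact mul_le_mul_of_nonneg_left (rpow_le_rpow_of_nonpos ha haw (by norm_num)) (by positivity)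

lemma norm_hankelIntegrand_le_rpow {z u : ℝ} (hu : 0 < u) :
    ‖hankelIntegrand z u‖ ≤ u ^ (-(1:ℝ)/2) := by
  have h1 : (1:ℝ) ≤ ‖(⟨1, u / (2 * z)⟩ : ℂ)‖ := by
    simpa using Complex.abs_re_le_norm ⟨1, u / (2 * z)⟩
  calc ‖hankelIntegrand z u‖ ≤ exp (-u) * u ^ (-(1:ℝ)/2) * 1 ^ (-(1:ℝ)/2) :=
        norm_hankelIntegrand_le hu one_pos h1
    _ ≤ 1 * u ^ (-(1:ℝ)/2) * 1 := by
        rw [one_rpow]; gcongr; exact exp_le_one_iff.mpr (by linarith)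
    _ = u ^ (-(1:ℝ)/2) := by ring

lemma norm_hankelIntegrand_le_sqrt_mul {z u : ℝ} (hz : 0 < z) (hu : 0 < u) :
    ‖hankelIntegrand z u‖ ≤ √(2 * z) * (exp (-u) * u⁻¹) := by
  have h1 : u / (2 * z) ≤ ‖(⟨1, u / (2 * z)⟩ : ℂ)‖ :=
    (le_abs_self _).trans (Complex.abs_im_le_norm ⟨1, u / (2 * z)⟩)
  calc ‖hankelIntegrand z u‖ ≤ exp (-u) * u ^ (-(1:ℝ)/2) * (u / (2 * z)) ^ (-(1:ℝ)/2) :=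
        norm_hankelIntegrand_le hu (by positivity) h1
    _ = √(2 * z) * (exp (-u) * (u ^ (-(1:ℝ)/2) * u ^ (-(1:ℝ)/2))) := by
        rw [div_rpow hu.le (by positivity), sqrt_eq_rpow, neg_div, rpow_neg (by positivity)]
        field_simp
        rw [← rpow_add (by positivity)]
        norm_num
    _ = √(2 * z) * (exp (-u) * u⁻¹) := by
        rw [← rpow_add hu]; norm_num [rpow_neg_one]

noncomputable def hankelMajorant (z u : ℝ) : ℝ :=
  (Ioc 0 z).indicator (fun u => u ^ (-(1:ℝ)/2)) u +
    √(2 * z) * ((Ioc z 1).indicator (·⁻¹) u + (Ioi 1).indicator (fun u => exp (-u)) u)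

section hankelMajorant

variable {z : ℝ}

lemma integrableOn_rpow_neg_half_Ioc (hz : 0 < z) :
    IntegrableOn (fun u : ℝ => u ^ (-(1:ℝ)/2)) (Ioc 0 z) :=
  (intervalIntegrable_iff_integrableOn_Ioc_of_le hz.le).mp
    (intervalIntegral.intervalIntegrable_rpow' (by norm_num))

lemma integrableOn_inv_Ioc (hz : 0 < z) (b : ℝ) : IntegrableOn (·⁻¹) (Ioc z b) :=
  ((continuousOn_inv₀.mono fun _ hu => (hz.trans_le hu.1).ne').integrableOn_compact
    isCompact_Icc).mono_set Ioc_subset_Icc_self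

lemma indicator_inv_add_indicator_exp_neg_nonneg (hz : 0 < z) (u : ℝ) :
    0 ≤ (Ioc z 1).indicator (·⁻¹) u + (Ioi 1).indicator (fun u => exp (-u)) u :=
  add_nonneg (indicator_nonneg (fun _ ha => inv_nonneg.mpr (hz.trans ha.1).le) u)
    (indicator_nonneg (fun _ _ => (exp_pos _).le) u)

lemma exp_neg_mul_inv_le_indicator {u : ℝ} (hz : 0 < z) (hzu : z < u) :
    exp (-u) * u⁻¹ ≤ (Ioc z 1).indicator (·⁻¹) u + (Ioi 1).indicator (fun u => exp (-u)) u := by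
  have hu : 0 < u := hz.trans hzu
  rcases le_or_gt u 1 with hu1 | hu1
  · rw [indicator_of_mem (mem_Ioc.mpr ⟨hzu, hu1⟩), indicator_of_notMem (notMem_Ioi.mpr hu1),
      add_zero]
    exact mul_le_of_le_one_left (by positivity) (exp_le_one_iff.mpr (by linarith))
  · rw [indicator_of_notMem fun h => (not_le.mpr hu1) h.2, indicator_of_mem (mem_Ioi.mpr hu1),
      zero_add]
    exact mul_le_of_le_one_right (exp_pos _).le (inv_le_one_of_one_le₀ hu1.le)

lemma hankelMajorant_nonneg (hz : 0 < z) (u : ℝ) : 0 ≤ hankelMajorant z u :=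
  add_nonneg (indicator_nonneg (fun _ ha => rpow_nonneg ha.1.le _) u)
    (mul_nonneg (sqrt_nonneg _) (indicator_inv_add_indicator_exp_neg_nonneg hz u))

lemma norm_hankelIntegrand_le_hankelMajorant {u : ℝ} (hz : 0 < z) (hu : 0 < u) :
    ‖hankelIntegrand z u‖ ≤ hankelMajorant z u := by
  unfold hankelMajorant
  rcases le_or_gt u z with huz | hzu
  · rw [indicator_of_mem (mem_Ioc.mpr ⟨hu, huz⟩)]
    exact le_add_of_le_of_nonneg (norm_hankelIntegrand_le_rpow hu)
      (mul_nonneg (sqrt_nonneg _) (indicator_inv_add_indicator_exp_neg_nonneg hz u))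
  · rw [indicator_of_notMem fun h => (not_le.mpr hzu) h.2, zero_add]
    exact (norm_hankelIntegrand_le_sqrt_mul hz hu).trans
      (mul_le_mul_of_nonneg_left (exp_neg_mul_inv_le_indicator hz hzu) (sqrt_nonneg _))

lemma integrable_hankelMajorant (hz : 0 < z) : Integrable (hankelMajorant z) :=
  ((integrableOn_rpow_neg_half_Ioc hz).integrable_indicator measurableSet_Ioc).add
    ((((integrableOn_inv_Ioc hz 1).integrable_indicator measurableSet_Ioc).add
      ((integrableOn_exp_neg_Ioi 1).integrable_indicator measurableSet_Ioi)).const_mul _)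

lemma integral_hankelMajorant (hz : 0 < z) (hz1 : z ≤ 1) :
    ∫ u, hankelMajorant z u = 2 * √z + √(2 * z) * (-log z + exp (-1)) := by
  have h1 : ∫ u in Ioc 0 z, u ^ (-(1:ℝ)/2) = 2 * √z := by
    rw [← intervalIntegral.integral_of_le hz.le, integral_rpow (Or.inl (by norm_num)),
      zero_rpow (by norm_num), sqrt_eq_rpow]
    norm_num
    ring
  have h2 : ∫ u in Ioc z 1, u⁻¹ = -log z := by
    rw [← intervalIntegral.integral_of_le hz1, integral_inv_of_pos hz one_pos, one_div, log_inv]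
  have hint₁ := (integrableOn_rpow_neg_half_Ioc hz).integrable_indicator measurableSet_Ioc
  have hint₂ := (integrableOn_inv_Ioc hz 1).integrable_indicator measurableSet_Ioc
  have hint₃ := (integrableOn_exp_neg_Ioi 1).integrable_indicator measurableSet_Ioi
  have hint₂₃ : Integrable fun u => √(2 * z) * ((Ioc z 1).indicator (·⁻¹) u +
      (Ioi 1).indicator (fun u => exp (-u)) u) := (hint₂.add hint₃).const_mul _
  unfold hankelMajorant
  rw [integral_add hint₁ hint₂₃, integral_const_mul, integral_add hint₂ hint₃,
    integral_indicator measurableSet_Ioc, integral_indicator measurableSet_Ioc,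
    integral_indicator measurableSet_Ioi, h1, h2, integral_exp_neg_Ioi]

lemma integral_hankelMajorant_le (hz : 0 < z) (hz1 : z ≤ 1) :
    ∫ u, hankelMajorant z u ≤ 4 * (z ^ ((1:ℝ)/2) + z ^ ((1:ℝ)/2) * |log z|) := by
  have hlog : -log z = |log z| := (abs_of_nonpos (log_nonpos hz.le hz1)).symm
  have hsqrt : √(2 * z) ≤ 2 * √z := by
    rw [sqrt_mul zero_le_two]
    gcongr
    exact sqrt_le_iff.mpr ⟨by norm_num, by norm_num⟩
  have he : exp (-1) ≤ 1 := exp_le_one_iff.mpr (by norm_num)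
  rw [integral_hankelMajorant hz hz1, ← sqrt_eq_rpow, hlog]
  have := abs_nonneg (log z)
  have := sqrt_nonneg z
  nlinarith [mul_le_mul_of_nonneg_left he (sqrt_nonneg (2 * z))]

end hankelMajorant

/-- Bound on the integral factor in the representation of `H_0^{(1)}`:
`|∫_0^∞ e^{-u} u^{-1/2} (1 + iu/(2z))^{-1/2} du| ≤ C (z^{1/2} + z^{1/2}|log z|)`
for `0 < z ≤ 1`. -/
theorem stmt9 :
    ∃ C > 0, ∀ z : ℝ, 0 < z → z ≤ 1 →
      ‖∫ u in Set.Ioi (0:ℝ),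
          Complex.exp (-(u : ℂ)) * (u : ℂ) ^ (-(1:ℂ)/2) *
            (1 + Complex.I * (u : ℂ) / (2 * (z : ℂ))) ^ (-(1:ℂ)/2)‖ ≤
        C * (z ^ ((1:ℝ)/2) + z ^ ((1:ℝ)/2) * |Real.log z|) := by
  refine ⟨4, by norm_num, fun z hz hz1 => ?_⟩
  have hmaj := integrable_hankelMajorant hz
  calc ‖∫ u in Ioi 0, hankelIntegrand z u‖
      ≤ ∫ u in Ioi 0, ‖hankelIntegrand z u‖ := norm_integral_le_integral_norm _
    _ ≤ ∫ u in Ioi 0, hankelMajorant z u :=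
        integral_mono_of_nonneg (.of_forall fun _ => norm_nonneg _) hmaj.restrict
          ((ae_restrict_iff' measurableSet_Ioi).mpr
            (.of_forall fun _ hu => norm_hankelIntegrand_le_hankelMajorant hz hu))
    _ ≤ ∫ u, hankelMajorant z u :=
        setIntegral_le_integral hmaj (.of_forall (hankelMajorant_nonneg hz))
    _ ≤ 4 * (z ^ ((1:ℝ)/2) + z ^ ((1:ℝ)/2) * |log z|) := integral_hankelMajorant_le hz hz1
end

section
/- Let x : ℝ → ℝ² be a C^∞ curve parametrized (near 0) as the graph x(s) = (s, f(s)) with f C^∞ and |f(s)| ≤ C s². Then for s > 0 small, φ(s) := ‖x(s) − x(0)‖ = s √(1 + f(s)²/s²), and for every integer m ≥ 0 there is C_m with |(d/ds)^m φ(s)| ≤ C_m uniformly for 0 < s ≤ 1. -/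
open MeasureTheory intervalIntegral Set

/-- Parametric integrals encoding the Hadamard quotient: `G f k x = ∫₀¹ tᵏ f⁽ᵏ⁺¹⁾(tx) dt`. -/
noncomputable def hadG (f : ℝ → ℝ) (k : ℕ) (x : ℝ) : ℝ :=
  ∫ t in (0:ℝ)..1, t ^ k * iteratedDeriv (k + 1) f (t * x)

lemma hadG_hasDerivAt (f : ℝ → ℝ) (hf : ContDiff ℝ (⊤ : ℕ∞) f) (k : ℕ) (x₀ : ℝ) :
    HasDerivAt (hadG f k) (hadG f (k + 1) x₀) x₀ := by
  have hder : ∀ m : ℕ, Differentiable ℝ (iteratedDeriv m f) := fun m =>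
    hf.differentiable_iteratedDeriv m (mod_cast lt_top_iff_ne_top.2 (by simp))
  have hcont : ∀ m : ℕ, Continuous (iteratedDeriv m f) := fun m =>
    hf.continuous_iteratedDeriv m (by exact_mod_cast le_top)
  -- bound for the derivative integrand
  obtain ⟨M, hM⟩ : ∃ M, ∀ y ∈ Icc (-(|x₀| + 1)) (|x₀| + 1),
      ‖iteratedDeriv (k + 2) f y‖ ≤ M :=
    isCompact_Icc.exists_bound_of_continuousOn (hcont (k + 2)).continuousOn
  have key := intervalIntegral.hasDerivAt_integral_of_dominated_loc_of_deriv_le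
    (F := fun x t => t ^ k * iteratedDeriv (k + 1) f (t * x))
    (F' := fun x t => t ^ (k + 1) * iteratedDeriv (k + 2) f (t * x))
    (x₀ := x₀) (a := 0) (b := 1) (μ := volume) (bound := fun _ => |M|)
    (s := Metric.ball x₀ 1) (Metric.ball_mem_nhds x₀ one_pos)
    (Filter.Eventually.of_forall fun x =>
      (Continuous.aestronglyMeasurable (by fun_prop)))
    (Continuous.intervalIntegrable (by fun_prop) _ _)
    (Continuous.aestronglyMeasurable (by fun_prop))
    (Filter.Eventually.of_forall fun t ht x hx => ?_)
    (intervalIntegrable_const)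
    (Filter.Eventually.of_forall fun t ht x hx => ?_)
  · exact key.2
  · -- bound
    rw [Set.uIoc_of_le (by norm_num : (0:ℝ) ≤ 1)] at ht
    have ht0 : 0 ≤ t := le_of_lt ht.1
    have ht1 : t ≤ 1 := ht.2
    have hxball : |x - x₀| < 1 := by
      simpa [Metric.mem_ball, Real.dist_eq] using hx
    have hxb : |x| ≤ |x₀| + 1 := by
      have := abs_sub_abs_le_abs_sub x x₀
      linarith
    have htx : t * x ∈ Icc (-(|x₀| + 1)) (|x₀| + 1) := by
      have : |t * x| ≤ |x₀| + 1 := by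
        rw [abs_mul]
        calc |t| * |x| ≤ 1 * (|x₀| + 1) := by
              apply mul_le_mul (by rwa [abs_of_nonneg ht0]) hxb (abs_nonneg x) zero_le_one
          _ = |x₀| + 1 := one_mul _
      exact abs_le.1 this
    have h1 : |t ^ (k+1)| ≤ 1 := by
      rw [abs_pow]
      exact pow_le_one₀ (abs_nonneg t) (by rwa [abs_of_nonneg ht0])
    calc ‖t ^ (k+1) * iteratedDeriv (k + 2) f (t * x)‖
        = |t ^ (k+1)| * ‖iteratedDeriv (k + 2) f (t * x)‖ := by
          rw [Real.norm_eq_abs, abs_mul]; rfl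
      _ ≤ 1 * M := mul_le_mul h1 (hM _ htx) (norm_nonneg _) zero_le_one
      _ ≤ |M| := by rw [one_mul]; exact le_abs_self M
  · -- differentiability
    have h1 : HasDerivAt (iteratedDeriv (k + 1) f) (iteratedDeriv (k + 2) f (t * x)) (t * x) := by
      have := ((hder (k + 1)) (t * x)).hasDerivAt
      rwa [show iteratedDeriv (k + 2) f = deriv (iteratedDeriv (k + 1) f) from
        iteratedDeriv_succ]
    have h2 : HasDerivAt (fun y : ℝ => t * y) t x := by
      simpa using (hasDerivAt_id x).const_mul t
    have h3 := (h1.comp x h2).const_mul (t ^ k)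
    rw [show t ^ (k + 1) * iteratedDeriv (k + 2) f (t * x) =
      t ^ k * (iteratedDeriv (k + 2) f (t * x) * t) by ring]
    exact h3

lemma hadG_contDiff (f : ℝ → ℝ) (hf : ContDiff ℝ (⊤ : ℕ∞) f) : ContDiff ℝ (⊤ : ℕ∞) (hadG f 0) := by
  suffices h : ∀ n : ℕ, ∀ k : ℕ, ContDiff ℝ n (hadG f k) by
    rw [contDiff_infty]
    exact fun n => h n 0
  intro n
  induction n with
  | zero =>
    intro k
    rw [Nat.cast_zero, contDiff_zero]
    exact continuous_iff_continuousAt.2 fun x =>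
      ((hadG_hasDerivAt f hf k x).differentiableAt).continuousAt
  | succ n ih =>
    intro k
    have hd : deriv (hadG f k) = hadG f (k + 1) :=
      funext fun x => (hadG_hasDerivAt f hf k x).deriv
    rw [show ((n + 1 : ℕ) : WithTop ℕ∞) = (n : WithTop ℕ∞) + 1 by norm_cast,
      contDiff_succ_iff_deriv]
    refine ⟨fun x => (hadG_hasDerivAt f hf k x).differentiableAt, by simp, ?_⟩
    rw [hd]; exact ih (k + 1)

lemma hadG_eq (f : ℝ → ℝ) (hf : ContDiff ℝ (⊤ : ℕ∞) f) (hf0 : f 0 = 0) (x : ℝ) :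
    f x = x * hadG f 0 x := by
  rcases eq_or_ne x 0 with rfl | hx
  · simp [hf0]
  · have h1 : hadG f 0 x = ∫ t in (0:ℝ)..1, deriv f (t * x) := by
      simp [hadG, iteratedDeriv_one]
    have h2 : (∫ t in (0:ℝ)..1, deriv f (t * x)) = x⁻¹ • ∫ u in (0:ℝ)..x, deriv f u := by
      have := intervalIntegral.integral_comp_mul_right (fun u => deriv f u) hx
        (a := 0) (b := 1)
      simp only [zero_mul, one_mul] at this
      rw [← this]
    have h3 : (∫ u in (0:ℝ)..x, deriv f u) = f x - f 0 :=
      intervalIntegral.integral_deriv_eq_sub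
        (fun y _ => (hf.differentiable (by simp)).differentiableAt)
        ((hf.continuous_iteratedDeriv 1 (by simp)).congr
          (fun y => (iteratedDeriv_one (f := f)).symm ▸ rfl) |>.intervalIntegrable _ _)
    rw [h1, h2, h3, hf0, sub_zero, smul_eq_mul]
    field_simp

/-- For a smooth curve in graph coordinates `x(s) = (s, f(s))` with
`|f(s)| ≤ C s²`, the chord length `φ(s) = ‖x(s) − x(0)‖` equals
`s √(1 + f(s)²/s²)` for `s > 0`, and all its derivatives are bounded on
`(0,1]`. -/
theorem stmt12 (f : ℝ → ℝ) (hf : ContDiff ℝ (⊤ : ℕ∞) f)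
    (C : ℝ) (hC : ∀ s : ℝ, |f s| ≤ C * s ^ 2) :
    (∀ s : ℝ, 0 < s →
      Real.sqrt (s ^ 2 + f s ^ 2) = s * Real.sqrt (1 + f s ^ 2 / s ^ 2)) ∧
    (∀ m : ℕ, ∃ Cm : ℝ, ∀ s : ℝ, 0 < s → s ≤ 1 →
      |iteratedDeriv m (fun s : ℝ => Real.sqrt (s ^ 2 + f s ^ 2)) s| ≤ Cm) := by
  have hf0 : f 0 = 0 := by
    have := hC 0
    simp at this
    exact this
  constructor
  · intro s hs
    have h1 : s ^ 2 + f s ^ 2 = s ^ 2 * (1 + f s ^ 2 / s ^ 2) := by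
      field_simp
    rw [h1, Real.sqrt_mul (sq_nonneg s), Real.sqrt_sq hs.le]
  · intro m
    set g := hadG f 0 with hg
    have hgC : ContDiff ℝ (⊤ : ℕ∞) g := hadG_contDiff f (hf.of_le (by simp))
    set ψ : ℝ → ℝ := fun s => s * Real.sqrt (1 + g s ^ 2) with hψ
    have hψC : ContDiff ℝ (⊤ : ℕ∞) ψ := by
      apply contDiff_id.mul
      apply ContDiff.sqrt
      · exact contDiff_const.add (hgC.pow 2)
      · intro x
        positivity
    have heq : ∀ s : ℝ, 0 < s →
        Real.sqrt (s ^ 2 + f s ^ 2) = ψ s := by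
      intro s hs
      have hfs : f s = s * g s := hadG_eq f (hf.of_le (by simp)) hf0 s
      have h1 : s ^ 2 + f s ^ 2 = s ^ 2 * (1 + g s ^ 2) := by rw [hfs]; ring
      rw [h1, Real.sqrt_mul (sq_nonneg s), Real.sqrt_sq hs.le]
    have hψcont : Continuous (iteratedDeriv m ψ) :=
      hψC.continuous_iteratedDeriv m (by exact_mod_cast le_top)
    obtain ⟨Cm, hCm⟩ : ∃ Cm, ∀ y ∈ Icc (0:ℝ) 1, ‖iteratedDeriv m ψ y‖ ≤ Cm :=
      isCompact_Icc.exists_bound_of_continuousOn hψcont.continuousOn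
    refine ⟨Cm, fun s hs hs1 => ?_⟩
    have hnhds : Ioi (0:ℝ) ∈ nhds s := isOpen_Ioi.mem_nhds hs
    have hEE : (fun s : ℝ => Real.sqrt (s ^ 2 + f s ^ 2)) =ᶠ[nhds s] ψ :=
      Filter.eventuallyEq_of_mem hnhds (fun y hy => heq y hy)
    rw [hEE.iteratedDeriv_eq m]
    exact (Real.norm_eq_abs _ ▸ hCm s ⟨hs.le, hs1⟩)
end

section
/- Let x : [0,1] → ℝ² be a C^∞ regular closed curve and set φ(s,t) = ‖x(s) − x(t)‖, r(s,t) = (x(s) − x(t))/‖x(s) − x(t)‖ for s ≠ t. Let σ = s − t. Then for every n ≥ 0 there is C_n with |(d/dσ)^n [ (ẋ(t))^⊥ · r ]| ≤ C_n σ^{1−n} for 0 < σ small (with τ = s + t held fixed). -/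
open Set

namespace Stmt14Aux

noncomputable section

abbrev ee : WithTop ℕ∞ := (⊤ : ℕ∞)

lemma le_ee (j : ℕ) : (j : WithTop ℕ∞) ≤ ee := by
  show (j : WithTop ℕ∞) ≤ ((⊤:ℕ∞) : WithTop ℕ∞); exact_mod_cast le_top (α := ℕ∞)

lemma one_le_ee : (1 : WithTop ℕ∞) ≤ ee := by
  show (1 : WithTop ℕ∞) ≤ ((⊤:ℕ∞) : WithTop ℕ∞); exact_mod_cast le_top (α := ℕ∞)

lemma ee_ne_zero : ee ≠ 0 := ne_of_gt (lt_of_lt_of_le zero_lt_one one_le_ee)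

lemma ee_add_one : ee + 1 ≤ ee := by
  show ((⊤:ℕ∞) : WithTop ℕ∞) + 1 ≤ ((⊤:ℕ∞) : WithTop ℕ∞); exact_mod_cast le_top (α := ℕ∞)

lemma iteratedDeriv_const_mul_of_isOpen {s : Set ℝ} (hs : IsOpen s) {f : ℝ → ℝ}
    (hf : ContDiffOn ℝ ee f s) (c : ℝ) :
    ∀ j : ℕ, ∀ σ ∈ s, iteratedDeriv j (fun t => c * f t) σ = c * iteratedDeriv j f σ := by
  intro j
  induction j generalizing f with
  | zero => simp
  | succ j ih =>
    intro σ hσ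
    rw [iteratedDeriv_succ', iteratedDeriv_succ']
    have h1 : (fun t => deriv (fun t' => c * f t') t) =ᶠ[nhds σ] fun t => c * deriv f t := by
      filter_upwards [hs.mem_nhds hσ] with t ht
      exact deriv_const_mul c ((hf.differentiableOn ee_ne_zero).differentiableAt (hs.mem_nhds ht))
    rw [Filter.EventuallyEq.iteratedDeriv_eq j h1]
    exact ih (hf.deriv_of_isOpen hs ee_add_one) σ hσ

lemma bnd_mul {σ1 : ℝ} {u v : ℝ → ℝ} {k : ℕ} {m m' : ℤ} {C C' : ℝ}
    (hC : 0 ≤ C) (hC' : 0 ≤ C')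
    (hu : ContDiffOn ℝ ee u (Ioo 0 σ1)) (hv : ContDiffOn ℝ ee v (Ioo 0 σ1))
    (hbu : ∀ σ ∈ Ioo (0:ℝ) σ1, ∀ j ≤ k, |iteratedDeriv j u σ| ≤ C * σ ^ (m - j))
    (hbv : ∀ σ ∈ Ioo (0:ℝ) σ1, ∀ j ≤ k, |iteratedDeriv j v σ| ≤ C' * σ ^ (m' - j)) :
    ∀ σ ∈ Ioo (0:ℝ) σ1, ∀ j ≤ k,
      |iteratedDeriv j (fun t => u t * v t) σ| ≤ 2 ^ k * C * C' * σ ^ (m + m' - j) := by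
  intro σ hσ j hj
  have hσ0 : 0 < σ := hσ.1
  have h0 : ∀ (w : ℝ → ℝ) (i : ℕ), ‖iteratedFDerivWithin ℝ i w (Ioo 0 σ1) σ‖ = |iteratedDeriv i w σ| := by
    intro w i
    rw [iteratedFDerivWithin_of_isOpen i isOpen_Ioo hσ, norm_iteratedFDeriv_eq_norm_iteratedDeriv,
      Real.norm_eq_abs]
  have key : |iteratedDeriv j (fun t => u t * v t) σ| ≤
      ∑ i ∈ Finset.range (j + 1),
        (j.choose i : ℝ) * |iteratedDeriv i u σ| * |iteratedDeriv (j - i) v σ| := by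
    calc |iteratedDeriv j (fun t => u t * v t) σ|
        = ‖iteratedFDerivWithin ℝ j (fun t => u t * v t) (Ioo 0 σ1) σ‖ := (h0 _ j).symm
      _ ≤ ∑ i ∈ Finset.range (j + 1), (j.choose i : ℝ) *
            ‖iteratedFDerivWithin ℝ i u (Ioo 0 σ1) σ‖ *
            ‖iteratedFDerivWithin ℝ (j - i) v (Ioo 0 σ1) σ‖ :=
          norm_iteratedFDerivWithin_mul_le hu hv isOpen_Ioo.uniqueDiffOn hσ (le_ee j)
      _ = ∑ i ∈ Finset.range (j + 1),
            (j.choose i : ℝ) * |iteratedDeriv i u σ| * |iteratedDeriv (j - i) v σ| := by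
          refine Finset.sum_congr rfl fun i _ => by rw [h0, h0]
  have step : ∀ i ∈ Finset.range (j + 1),
      (j.choose i : ℝ) * |iteratedDeriv i u σ| * |iteratedDeriv (j - i) v σ| ≤
        (j.choose i : ℝ) * (C * C' * σ ^ (m + m' - j)) := by
    intro i hi
    have hij : i ≤ j := Nat.lt_succ_iff.mp (Finset.mem_range.mp hi)
    have h1 := hbu σ hσ i (hij.trans hj)
    have h2 := hbv σ hσ (j - i) ((Nat.sub_le j i).trans hj)
    have hcast : ((j - i : ℕ) : ℤ) = (j : ℤ) - i := Nat.cast_sub hij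
    have hmul : |iteratedDeriv i u σ| * |iteratedDeriv (j - i) v σ| ≤
        (C * σ ^ (m - i)) * (C' * σ ^ (m' - ((j : ℤ) - i))) := by
      rw [← hcast]
      exact mul_le_mul h1 h2 (abs_nonneg _) (by positivity)
    have heq : (C * σ ^ (m - i)) * (C' * σ ^ (m' - ((j : ℤ) - i))) = C * C' * σ ^ (m + m' - j) := by
      have hexp : (m - i) + (m' - ((j : ℤ) - i)) = m + m' - j := by ring
      rw [mul_mul_mul_comm, ← zpow_add₀ hσ0.ne', hexp]
    rw [mul_assoc, mul_assoc]
    refine mul_le_mul_of_nonneg_left ?_ (by positivity)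
    calc |iteratedDeriv i u σ| * |iteratedDeriv (j - i) v σ|
        ≤ (C * σ ^ (m - i)) * (C' * σ ^ (m' - ((j : ℤ) - i))) := hmul
      _ = C * C' * σ ^ (m + m' - j) := heq
      _ = C * (C' * σ ^ (m + m' - j)) := by ring
  have hz : (0:ℝ) ≤ σ ^ (m + m' - j) := le_of_lt (zpow_pos hσ0 _)
  calc |iteratedDeriv j (fun t => u t * v t) σ|
      ≤ ∑ i ∈ Finset.range (j + 1), (j.choose i : ℝ) * (C * C' * σ ^ (m + m' - j)) :=
        key.trans (Finset.sum_le_sum step)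
    _ = (2 : ℝ) ^ j * (C * C' * σ ^ (m + m' - j)) := by
        rw [← Finset.sum_mul, ← Nat.cast_sum, Nat.sum_range_choose]
        push_cast; ring
    _ ≤ 2 ^ k * C * C' * σ ^ (m + m' - j) := by
        have h2 : (2:ℝ) ^ j ≤ 2 ^ k := pow_le_pow_right₀ one_le_two hj
        have : (0:ℝ) ≤ C * C' * σ ^ (m + m' - j) := by positivity
        nlinarith




lemma bnd_inv_sqrt {c M : ℝ} (hc : 0 < c) (hM : 0 < M) (K : ℕ) :
    ∀ k ≤ K, ∃ C > 0, ∀ {σ1 : ℝ} {b : ℝ → ℝ},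
      ContDiffOn ℝ ee b (Ioo 0 σ1) →
      (∀ σ ∈ Ioo (0:ℝ) σ1, c * σ ^ 2 ≤ b σ) →
      (∀ σ ∈ Ioo (0:ℝ) σ1, ∀ j ≤ K + 1, |iteratedDeriv j b σ| ≤ M * σ ^ ((2:ℤ) - j)) →
      ∀ σ ∈ Ioo (0:ℝ) σ1, ∀ j ≤ k,
      |iteratedDeriv j (fun t => (Real.sqrt (b t))⁻¹) σ| ≤ C * σ ^ ((-1:ℤ) - j) := by
  have hbp : ∀ {σ1 : ℝ} {b : ℝ → ℝ}, (∀ σ ∈ Ioo (0:ℝ) σ1, c * σ ^ 2 ≤ b σ) →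
      ∀ σ ∈ Ioo (0:ℝ) σ1, 0 < b σ := by
    intro σ1 b hbpos σ hσ
    have := hbpos σ hσ
    nlinarith [pow_pos hσ.1 2]
  have hgs : ∀ {σ1 : ℝ} {b : ℝ → ℝ}, ContDiffOn ℝ ee b (Ioo 0 σ1) →
      (∀ σ ∈ Ioo (0:ℝ) σ1, c * σ ^ 2 ≤ b σ) →
      ContDiffOn ℝ ee (fun t => (Real.sqrt (b t))⁻¹) (Ioo 0 σ1) := by
    intro σ1 b hb hbpos
    have hsq : ContDiffOn ℝ ee (fun t => Real.sqrt (b t)) (Ioo 0 σ1) := by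
      intro σ hσ
      exact (Real.contDiffAt_sqrt (hbp hbpos σ hσ).ne').comp_contDiffWithinAt σ (hb σ hσ)
    exact hsq.inv fun σ hσ => (Real.sqrt_pos.mpr (hbp hbpos σ hσ)).ne'
  intro k
  induction k with
  | zero =>
    intro _
    refine ⟨(Real.sqrt c)⁻¹, by positivity, ?_⟩
    intro σ1 b hb hbpos hbbd σ hσ j hj
    interval_cases j
    have hσ0 : 0 < σ := hσ.1
    have hsc : Real.sqrt (c * σ ^ 2) = Real.sqrt c * σ := by
      rw [Real.sqrt_mul hc.le, Real.sqrt_sq hσ0.le]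
    have h1 : Real.sqrt c * σ ≤ Real.sqrt (b σ) := by
      rw [← hsc]; exact Real.sqrt_le_sqrt (hbpos σ hσ)
    have h2 : (Real.sqrt (b σ))⁻¹ ≤ (Real.sqrt c * σ)⁻¹ := by
      apply inv_anti₀ (by positivity) h1
    have h3 : |iteratedDeriv 0 (fun t => (Real.sqrt (b t))⁻¹) σ| = (Real.sqrt (b σ))⁻¹ := by
      rw [iteratedDeriv_zero]
      exact abs_of_pos (inv_pos.mpr (Real.sqrt_pos.mpr (hbp hbpos σ hσ)))
    rw [h3]
    calc (Real.sqrt (b σ))⁻¹ ≤ (Real.sqrt c * σ)⁻¹ := h2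
      _ = (Real.sqrt c)⁻¹ * σ ^ ((-1:ℤ) - (0:ℕ)) := by
          rw [mul_inv]; norm_num
  | succ k ih =>
    intro hk1
    obtain ⟨C, hC, hIH⟩ := ih (Nat.le_of_succ_le hk1)
    set Cφ : ℝ := 2 ^ k * M * (2 ^ k * C * (2 ^ k * C * C)) with hCφdef
    have hCφ : 0 < Cφ := by positivity
    refine ⟨max C Cφ, lt_max_of_lt_left hC, ?_⟩
    intro σ1 b hb hbpos hbbd σ hσ j hj
    set g : ℝ → ℝ := fun t => (Real.sqrt (b t))⁻¹ with hgdef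
    have hg : ContDiffOn ℝ ee g (Ioo 0 σ1) := hgs hb hbpos
    have hIH' := hIH hb hbpos hbbd
    have hb' : ContDiffOn ℝ ee (deriv b) (Ioo 0 σ1) := hb.deriv_of_isOpen isOpen_Ioo ee_add_one
    set u1 : ℝ → ℝ := fun t => -(1/2) * deriv b t with hu1def
    have hu1 : ContDiffOn ℝ ee u1 (Ioo 0 σ1) := hb'.const_smul (-(1/2):ℝ)
    have hu1bd : ∀ σ ∈ Ioo (0:ℝ) σ1, ∀ j ≤ k, |iteratedDeriv j u1 σ| ≤ M * σ ^ ((1:ℤ) - j) := by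
      intro σ hσ j hj
      have he : iteratedDeriv j u1 σ = -(1/2) * iteratedDeriv j (deriv b) σ :=
        iteratedDeriv_const_mul_of_isOpen isOpen_Ioo hb' (-(1/2)) j σ hσ
      have he2 : iteratedDeriv j (deriv b) σ = iteratedDeriv (j+1) b σ := by
        rw [iteratedDeriv_succ']
      have hb3 := hbbd σ hσ (j+1) (by omega)
      have hexp : ((2:ℤ) - (j+1:ℕ)) = (1:ℤ) - j := by push_cast; ring
      rw [he, he2, abs_mul]
      have habs : |(-(1/2):ℝ)| ≤ 1 := by rw [abs_neg, abs_of_pos] <;> norm_num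
      calc |(-(1/2):ℝ)| * |iteratedDeriv (j+1) b σ| ≤ 1 * (M * σ ^ ((2:ℤ) - (j+1:ℕ))) := by
            apply mul_le_mul habs hb3 (abs_nonneg _) one_pos.le
        _ = M * σ ^ ((1:ℤ) - j) := by rw [hexp]; ring
    have hgg := bnd_mul hC.le hC.le hg hg hIH' hIH'
    have hggg := bnd_mul hC.le (by positivity) hg (hg.mul hg) hIH' hgg
    have hφ := bnd_mul hM.le (by positivity) hu1 (hg.mul (hg.mul hg)) hu1bd hggg
    rcases Nat.lt_succ_iff_lt_or_eq.mp (Nat.lt_succ_of_le hj) with hjk | hjk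
    · calc |iteratedDeriv j g σ| ≤ C * σ ^ ((-1:ℤ) - j) := hIH' σ hσ j (Nat.lt_succ_iff.mp hjk)
        _ ≤ max C Cφ * σ ^ ((-1:ℤ) - j) :=
            mul_le_mul_of_nonneg_right (le_max_left _ _) (zpow_pos hσ.1 _).le
    · subst hjk
      have hev : deriv g =ᶠ[nhds σ] fun t => u1 t * (g t * (g t * g t)) := by
        filter_upwards [isOpen_Ioo.mem_nhds hσ] with t ht
        have hbt : HasDerivAt b (deriv b t) t :=
          ((hb.differentiableOn ee_ne_zero).differentiableAt
            (isOpen_Ioo.mem_nhds ht)).hasDerivAt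
        have hst : HasDerivAt (fun y => Real.sqrt (b y)) (deriv b t / (2 * Real.sqrt (b t))) t :=
          hbt.sqrt (hbp hbpos t ht).ne'
        have hsp : 0 < Real.sqrt (b t) := Real.sqrt_pos.mpr (hbp hbpos t ht)
        have hgt : HasDerivAt g (-(deriv b t / (2 * Real.sqrt (b t))) / (Real.sqrt (b t)) ^ 2) t :=
          hst.inv hsp.ne'
        rw [hgt.deriv]
        show -(deriv b t / (2 * Real.sqrt (b t))) / (Real.sqrt (b t)) ^ 2 =
          -(1/2) * deriv b t * ((Real.sqrt (b t))⁻¹ * ((Real.sqrt (b t))⁻¹ * (Real.sqrt (b t))⁻¹))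
        field_simp
        try ring
      have heq : iteratedDeriv (k+1) g σ
          = iteratedDeriv k (fun t => u1 t * (g t * (g t * g t))) σ := by
        rw [iteratedDeriv_succ', Filter.EventuallyEq.iteratedDeriv_eq k hev]
      have hbd := hφ σ hσ k (le_refl k)
      have hexp2 : ((1:ℤ) + (-1 + (-1 + -1)) - k) = (-1:ℤ) - (k+1:ℕ) := by push_cast; ring
      rw [heq]
      calc |iteratedDeriv k (fun t => u1 t * (g t * (g t * g t))) σ|
          ≤ Cφ * σ ^ ((1:ℤ) + (-1 + (-1 + -1)) - k) := hbd
        _ = Cφ * σ ^ ((-1:ℤ) - (k+1:ℕ)) := by rw [hexp2]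
        _ ≤ max C Cφ * σ ^ ((-1:ℤ) - (k+1:ℕ)) :=
            mul_le_mul_of_nonneg_right (le_max_right _ _) (zpow_pos hσ.1 _).le

lemma slice_lemma (F : ℝ × ℝ → ℝ) (hF : ContDiff ℝ ee F) (k : ℕ) :
    ∃ G : ℝ × ℝ → ℝ, ContDiff ℝ ee G ∧
      (∀ τ σ : ℝ, iteratedDeriv k (fun σ' => F (τ, σ')) σ = G (τ, σ)) ∧
      ((∀ p : ℝ × ℝ, F ((2, 0) + p) = F p) → ∀ p : ℝ × ℝ, G ((2, 0) + p) = G p) := by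
  induction k with
  | zero => exact ⟨F, hF, fun τ σ => by simp, fun h => h⟩
  | succ k ih =>
    obtain ⟨G, hG, hGeq, hGper⟩ := ih
    have hGd : Differentiable ℝ G := hG.differentiable ee_ne_zero
    refine ⟨fun p => fderiv ℝ G p (0, 1),
      (hG.fderiv_right ee_add_one).clm_apply contDiff_const, ?_, ?_⟩
    · intro τ σ
      rw [iteratedDeriv_succ]
      have h1 : deriv (fun σ' => iteratedDeriv k (fun σ'' => F (τ, σ'')) σ') σ
          = deriv (fun σ' => G (τ, σ')) σ := by
        congr 1
        exact funext fun σ' => hGeq τ σ'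
      rw [h1]
      have h3 : HasDerivAt (fun σ' : ℝ => ((τ, σ') : ℝ × ℝ)) (0, 1) σ :=
        (hasDerivAt_const σ τ).prodMk (hasDerivAt_id σ)
      have h2 : HasDerivAt (fun σ' => G (τ, σ')) (fderiv ℝ G (τ, σ) (0, 1)) σ :=
        (hGd (τ, σ)).hasFDerivAt.comp_hasDerivAt σ h3
      exact h2.deriv
    · intro hper p
      have h4 : (fun q : ℝ × ℝ => G ((2, 0) + q)) = G := funext (hGper hper)
      have h1 : HasFDerivAt (fun q : ℝ × ℝ => G ((2, 0) + q))
          ((fderiv ℝ G ((2, 0) + p)).comp (ContinuousLinearMap.id ℝ (ℝ × ℝ))) p :=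
        (hGd ((2, 0) + p)).hasFDerivAt.comp p ((hasFDerivAt_id p).const_add ((2:ℝ), (0:ℝ)))
      rw [h4, ContinuousLinearMap.comp_id] at h1
      show fderiv ℝ G ((2, 0) + p) (0, 1) = fderiv ℝ G p (0, 1)
      rw [← h1.fderiv]

lemma slice_bound_one (G : ℝ × ℝ → ℝ) (hG : Continuous G)
    (hGper : ∀ p : ℝ × ℝ, G ((2, 0) + p) = G p) :
    ∃ M > 0, ∀ τ : ℝ, ∀ σ ∈ Icc (0:ℝ) 1, |G (τ, σ)| ≤ M := by
  obtain ⟨M, hM⟩ := (isCompact_Icc.prod isCompact_Icc :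
      IsCompact (Icc (0:ℝ) 2 ×ˢ Icc (0:ℝ) 1)).exists_bound_of_continuousOn hG.continuousOn
  refine ⟨max M 1, lt_of_lt_of_le one_pos (le_max_right _ _), fun τ σ hσ => ?_⟩
  have hper2 : Function.Periodic (fun τ' => G (τ', σ)) 2 := by
    intro τ'
    have h := hGper (τ', σ)
    show G (τ' + 2, σ) = G (τ', σ)
    rw [show ((τ' + 2 : ℝ), σ) = ((2:ℝ), (0:ℝ)) + (τ', σ) by simp [Prod.ext_iff]; ring, h]
  obtain ⟨y, hy, hyeq⟩ := hper2.exists_mem_Ico₀ (by norm_num) τ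
  have h5 : |G (τ, σ)| = |G (y, σ)| := by rw [show G (τ, σ) = G (y, σ) from hyeq]
  rw [h5]
  have h6 := hM (y, σ) ⟨⟨hy.1, hy.2.le⟩, hσ⟩
  rw [Real.norm_eq_abs] at h6
  exact h6.trans (le_max_left _ _)

lemma slice_bound (F : ℝ × ℝ → ℝ) (hF : ContDiff ℝ ee F)
    (hFper : ∀ p : ℝ × ℝ, F ((2, 0) + p) = F p) (N : ℕ) :
    ∃ M > 0, ∀ k ≤ N, ∀ τ : ℝ, ∀ σ ∈ Icc (0:ℝ) 1,
      |iteratedDeriv k (fun σ' => F (τ, σ')) σ| ≤ M := by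
  induction N with
  | zero =>
    obtain ⟨G, hG, hGeq, hGper⟩ := slice_lemma F hF 0
    obtain ⟨M, hM0, hM⟩ := slice_bound_one G hG.continuous (hGper hFper)
    exact ⟨M, hM0, fun k hk τ σ hσ => by rw [Nat.le_zero.mp hk, hGeq]; exact hM τ σ hσ⟩
  | succ N ih =>
    obtain ⟨M, hM0, hM⟩ := ih
    obtain ⟨G, hG, hGeq, hGper⟩ := slice_lemma F hF (N + 1)
    obtain ⟨M', hM'0, hM'⟩ := slice_bound_one G hG.continuous (hGper hFper)
    refine ⟨max M M', lt_max_of_lt_left hM0, fun k hk τ σ hσ => ?_⟩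
    rcases Nat.lt_succ_iff_lt_or_eq.mp (Nat.lt_succ_of_le hk) with h | h
    · exact (hM k (Nat.lt_succ_iff.mp h) τ σ hσ).trans (le_max_left _ _)
    · rw [h, hGeq]
      exact (hM' τ σ hσ).trans (le_max_right _ _)

lemma periodic_deriv {E : Type*} [NormedAddCommGroup E] [NormedSpace ℝ E]
    {f : ℝ → E} (hf : Differentiable ℝ f) {c : ℝ} (hp : Function.Periodic f c) :
    Function.Periodic (deriv f) c := by
  intro t
  have haff : HasDerivAt (fun u : ℝ => u + c) 1 t := (hasDerivAt_id t).add_const c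
  have h1 := (hf (t + c)).hasDerivAt.scomp t haff
  have h2 : f ∘ (fun u : ℝ => u + c) = f := funext fun u => hp u
  rw [h2, one_smul] at h1
  exact h1.deriv.symm

lemma taylor_bnd {a : ℝ → ℝ} (ha : ContDiff ℝ ee a) (h0 : a 0 = 0) (h1 : deriv a 0 = 0)
    {M σ1 : ℝ} (hσ1 : 0 < σ1) (hσ11 : σ1 ≤ 1) (hM : 0 < M) (N : ℕ)
    (h2 : ∀ k ≤ N + 2, ∀ σ ∈ Icc (0:ℝ) 1, |iteratedDeriv k a σ| ≤ M) :
    ∀ σ ∈ Ioo (0:ℝ) σ1, ∀ j ≤ N, |iteratedDeriv j a σ| ≤ M * σ ^ ((2:ℤ) - j) := by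
  have hda : ContDiff ℝ ee (deriv a) := (contDiff_infty_iff_deriv.mp ha).2
  have hd2 : ∀ u ∈ Icc (0:ℝ) 1, ‖deriv (deriv a) u‖ ≤ M := by
    intro u hu
    have he : deriv (deriv a) u = iteratedDeriv 2 a u := by
      rw [iteratedDeriv_succ, iteratedDeriv_one]
    rw [Real.norm_eq_abs, he]
    exact h2 2 (by omega) u hu
  have key1 : ∀ σ ∈ Icc (0:ℝ) 1, |deriv a σ| ≤ M * σ := by
    intro σ hσ
    have h3 := Convex.norm_image_sub_le_of_norm_deriv_le (f := deriv a) (s := Icc (0:ℝ) 1)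
      (fun u _ => (hda.differentiable ee_ne_zero) u) hd2 (convex_Icc 0 1)
      (left_mem_Icc.mpr one_pos.le) hσ
    rw [h1, sub_zero, sub_zero, Real.norm_eq_abs, Real.norm_eq_abs,
      abs_of_nonneg hσ.1] at h3
    exact h3
  intro σ hσ j hj
  have hσ0 : 0 < σ := hσ.1
  have hσle1 : σ ≤ 1 := le_of_lt (lt_of_lt_of_le hσ.2 hσ11)
  match j with
  | 0 =>
    have key0 : |a σ| ≤ M * σ * σ := by
      have h4 : ∀ u ∈ Icc (0:ℝ) σ, ‖deriv a u‖ ≤ M * σ := by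
        intro u hu
        rw [Real.norm_eq_abs]
        exact (key1 u ⟨hu.1, hu.2.trans hσle1⟩).trans
          (mul_le_mul_of_nonneg_left (hu.2) hM.le)
      have h3 := Convex.norm_image_sub_le_of_norm_deriv_le (f := a) (s := Icc (0:ℝ) σ)
        (fun u _ => (ha.differentiable ee_ne_zero) u) h4 (convex_Icc 0 σ)
        (left_mem_Icc.mpr hσ0.le) (right_mem_Icc.mpr hσ0.le)
      rw [h0, sub_zero, sub_zero, Real.norm_eq_abs, Real.norm_eq_abs,
        abs_of_nonneg hσ0.le] at h3
      exact h3
    rw [iteratedDeriv_zero]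
    calc |a σ| ≤ M * σ * σ := key0
      _ = M * σ ^ ((2:ℤ) - (0:ℕ)) := by
          rw [show ((2:ℤ) - (0:ℕ)) = ((2:ℕ) : ℤ) by norm_num, zpow_natCast]
          ring
  | 1 =>
    rw [iteratedDeriv_one]
    calc |deriv a σ| ≤ M * σ := key1 σ ⟨hσ0.le, hσle1⟩
      _ = M * σ ^ ((2:ℤ) - (1:ℕ)) := by norm_num
  | (j + 2) =>
    have hb := h2 (j + 2) (by omega) σ ⟨hσ0.le, hσle1⟩
    have hpow : σ ^ (j : ℕ) ≤ 1 := pow_le_one₀ hσ0.le hσle1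
    have hpos : (0:ℝ) < σ ^ (j : ℕ) := pow_pos hσ0 _
    have hinv : (1:ℝ) ≤ (σ ^ (j : ℕ))⁻¹ := by
      rw [le_inv_comm₀ one_pos hpos]
      simpa using hpow
    have hzp : σ ^ ((2:ℤ) - (j + 2 : ℕ)) = (σ ^ (j : ℕ))⁻¹ := by
      rw [← zpow_natCast σ j, ← zpow_neg]
      congr 1
      push_cast
      ring
    calc |iteratedDeriv (j + 2) a σ| ≤ M := hb
      _ = M * 1 := by ring
      _ ≤ M * σ ^ ((2:ℤ) - (j + 2 : ℕ)) := by
          rw [hzp]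
          exact mul_le_mul_of_nonneg_left hinv hM.le

lemma chord_lb {x : ℝ → EuclideanSpace ℝ (Fin 2)} (hx : ContDiff ℝ ee x)
    (hper : Function.Periodic x 1) (hreg : ∀ t, deriv x t ≠ 0) :
    ∃ σ1 c : ℝ, 0 < σ1 ∧ σ1 ≤ 1 ∧ 0 < c ∧
      ∀ t σ : ℝ, 0 ≤ σ → σ ≤ σ1 → c * σ ≤ ‖x (t + σ) - x t‖ := by
  have hd : Differentiable ℝ x := hx.differentiable ee_ne_zero
  have hx' : ContDiff ℝ ee (deriv x) := (contDiff_infty_iff_deriv.mp hx).2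
  have hd' : Differentiable ℝ (deriv x) := hx'.differentiable ee_ne_zero
  have hper' : Function.Periodic (deriv x) 1 := periodic_deriv hd hper
  have hper'' : Function.Periodic (deriv (deriv x)) 1 := periodic_deriv hd' hper'
  -- minimum speed
  obtain ⟨t₀, ht₀, hmin⟩ := isCompact_Icc.exists_isMinOn (nonempty_Icc.mpr one_pos.le)
    (hd'.continuous.norm.continuousOn : ContinuousOn (fun t => ‖deriv x t‖) (Icc (0:ℝ) 1))
  set m : ℝ := ‖deriv x t₀‖ with hmdef
  have hm0 : 0 < m := norm_pos_iff.mpr (hreg t₀)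
  have hm : ∀ t : ℝ, m ≤ ‖deriv x t‖ := by
    intro t
    have hpn : Function.Periodic (fun t => ‖deriv x t‖) 1 := fun u => by simp [hper' u]
    obtain ⟨y, hy, hyeq⟩ := hpn.exists_mem_Ico₀ one_pos t
    rw [show ‖deriv x t‖ = ‖deriv x y‖ from hyeq]
    exact hmin ⟨hy.1, hy.2.le⟩
  -- bound on second derivative
  obtain ⟨K, hK⟩ := isCompact_Icc.exists_bound_of_continuousOn
    ((contDiff_infty_iff_deriv.mp hx').2.continuous.continuousOn :
      ContinuousOn (deriv (deriv x)) (Icc (0:ℝ) 1))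
  have hK0 : 0 ≤ K := le_trans (norm_nonneg _) (hK 0 (left_mem_Icc.mpr one_pos.le))
  have hKall : ∀ t : ℝ, ‖deriv (deriv x) t‖ ≤ K := by
    intro t
    have hpn : Function.Periodic (fun t => ‖deriv (deriv x) t‖) 1 := fun u => by
      simp [hper'' u]
    obtain ⟨y, hy, hyeq⟩ := hpn.exists_mem_Ico₀ one_pos t
    rw [show ‖deriv (deriv x) t‖ = ‖deriv (deriv x) y‖ from hyeq]
    exact hK y ⟨hy.1, hy.2.le⟩
  have hLip : ∀ u v : ℝ, ‖deriv x u - deriv x v‖ ≤ K * |u - v| := by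
    intro u v
    have := Convex.norm_image_sub_le_of_norm_deriv_le (f := deriv x) (s := univ)
      (fun w _ => hd' w) (fun w _ => hKall w) convex_univ (mem_univ v) (mem_univ u)
    simpa [Real.norm_eq_abs] using this
  refine ⟨min 1 (m / (2 * (K + 1))), m / 2, lt_min one_pos (by positivity),
    min_le_left _ _, by positivity, ?_⟩
  intro t σ hσ0 hσ1
  rcases eq_or_lt_of_le hσ0 with h | hσpos
  · simp [← h]
  set h : ℝ → EuclideanSpace ℝ (Fin 2) := fun u => x (t + u) - x t - u • deriv x t with hhdef
  have hderiv : ∀ u : ℝ, HasDerivAt h (deriv x (t + u) - deriv x t) u := by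
    intro u
    have haff : HasDerivAt (fun u : ℝ => t + u) 1 u := (hasDerivAt_id u).const_add t
    have h1 := (hd (t + u)).hasDerivAt.scomp u haff
    rw [one_smul] at h1
    have h2 : HasDerivAt (fun u : ℝ => u • deriv x t) ((1:ℝ) • deriv x t) u :=
      (hasDerivAt_id u).smul_const (deriv x t)
    rw [one_smul] at h2
    exact ((h1.sub_const (x t)).sub h2 : _)
  have hbd : ∀ u ∈ Icc (0:ℝ) σ, ‖deriv h u‖ ≤ K * σ := by
    intro u hu
    rw [(hderiv u).deriv]
    calc ‖deriv x (t + u) - deriv x t‖ ≤ K * |t + u - t| := hLip (t + u) t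
      _ = K * u := by rw [show t + u - t = u by ring, abs_of_nonneg hu.1]
      _ ≤ K * σ := mul_le_mul_of_nonneg_left hu.2 hK0
  have hmvt := Convex.norm_image_sub_le_of_norm_deriv_le (f := h) (s := Icc (0:ℝ) σ)
    (fun u _ => (hderiv u).differentiableAt) hbd (convex_Icc 0 σ)
    (left_mem_Icc.mpr hσ0) (right_mem_Icc.mpr hσ0)
  have hh0 : h 0 = 0 := by simp [hhdef]
  rw [hh0, sub_zero, sub_zero, Real.norm_eq_abs, abs_of_nonneg hσ0] at hmvt
  -- ‖x (t+σ) - x t‖ ≥ σ m - K σ²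
  have hsplit : x (t + σ) - x t = σ • deriv x t + h σ := by
    simp [hhdef]
  have htri : ‖σ • deriv x t‖ - ‖h σ‖ ≤ ‖x (t + σ) - x t‖ := by
    rw [hsplit]
    have := norm_add_le (σ • deriv x t + h σ) (-(h σ))
    simp only [add_neg_cancel_right, norm_neg] at this
    linarith
  have hsm : σ * m ≤ ‖σ • deriv x t‖ := by
    rw [norm_smul, Real.norm_eq_abs, abs_of_nonneg hσ0]
    exact mul_le_mul_of_nonneg_left (hm t) hσ0
  have hσ1' : σ ≤ m / (2 * (K + 1)) := hσ1.trans (min_le_right _ _)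
  have hKσ : K * σ * σ ≤ (m / 2) * σ := by
    have h7 : K * σ ≤ m / 2 := by
      calc K * σ ≤ K * (m / (2 * (K + 1))) := mul_le_mul_of_nonneg_left hσ1' hK0
        _ ≤ m / 2 := by
            rw [mul_comm, div_mul_eq_mul_div, div_le_div_iff₀ (by positivity) (by norm_num)]
            nlinarith
      
    calc K * σ * σ = (K * σ) * σ := by ring
      _ ≤ (m / 2) * σ := mul_le_mul_of_nonneg_right h7 hσ0
  calc (m / 2) * σ = σ * m - (m / 2) * σ := by ring
    _ ≤ ‖σ • deriv x t‖ - ‖h σ‖ := by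
        have : ‖h σ‖ ≤ (m / 2) * σ := hmvt.trans hKσ
        linarith [hsm]
    _ ≤ ‖x (t + σ) - x t‖ := htri

noncomputable def qcF (x : ℝ → EuclideanSpace ℝ (Fin 2)) (i : Fin 2) : ℝ × ℝ → ℝ :=
  fun p => (x ((p.1 + p.2) / 2)) i - (x ((p.1 - p.2) / 2)) i

noncomputable def qvF (x : ℝ → EuclideanSpace ℝ (Fin 2)) (i : Fin 2) : ℝ × ℝ → ℝ :=
  fun p => (deriv x ((p.1 - p.2) / 2)) i

noncomputable def AF (x : ℝ → EuclideanSpace ℝ (Fin 2)) : ℝ × ℝ → ℝ :=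
  fun p => -(qvF x 1 p) * qcF x 0 p + qvF x 0 p * qcF x 1 p

noncomputable def BF (x : ℝ → EuclideanSpace ℝ (Fin 2)) : ℝ × ℝ → ℝ :=
  fun p => qcF x 0 p ^ 2 + qcF x 1 p ^ 2

lemma hda_plus {x : ℝ → EuclideanSpace ℝ (Fin 2)} (hd : Differentiable ℝ x) (e σ : ℝ) :
    HasDerivAt (fun σ' : ℝ => x ((e + σ') / 2)) ((1/2 : ℝ) • deriv x ((e + σ)/2)) σ := by
  have haff : HasDerivAt (fun σ' : ℝ => (e + σ') / 2) (1/2) σ := by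
    simpa using ((hasDerivAt_id σ).const_add e).div_const 2
  have h1 := (hd ((e + σ)/2)).hasDerivAt.scomp σ haff
  simpa [Function.comp_def] using h1

lemma hda_minus {x : ℝ → EuclideanSpace ℝ (Fin 2)} (hd : Differentiable ℝ x) (e σ : ℝ) :
    HasDerivAt (fun σ' : ℝ => x ((e - σ') / 2)) ((-1/2 : ℝ) • deriv x ((e - σ)/2)) σ := by
  have haff : HasDerivAt (fun σ' : ℝ => (e - σ') / 2) (-1/2) σ := by
    simpa using ((hasDerivAt_id σ).const_sub e).div_const 2
  have h1 := (hd ((e - σ)/2)).hasDerivAt.scomp σ haff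
  simpa [Function.comp_def] using h1

lemma hasDerivAt_coord {f : ℝ → EuclideanSpace ℝ (Fin 2)} {f' : EuclideanSpace ℝ (Fin 2)} {σ : ℝ}
    (h : HasDerivAt f f' σ) (i : Fin 2) : HasDerivAt (fun σ' => (f σ') i) (f' i) σ :=
  (EuclideanSpace.proj (𝕜 := ℝ) i).hasFDerivAt.comp_hasDerivAt σ h

lemma qc_hasDerivAt {x : ℝ → EuclideanSpace ℝ (Fin 2)} (hd : Differentiable ℝ x)
    (i : Fin 2) (τ σ : ℝ) :
    HasDerivAt (fun σ' => qcF x i (τ, σ'))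
      (((1/2 : ℝ) • deriv x ((τ + σ)/2)) i - ((-1/2 : ℝ) • deriv x ((τ - σ)/2)) i) σ := by
  have h1 := hasDerivAt_coord (hda_plus hd τ σ) i
  have h2 := hasDerivAt_coord (hda_minus hd τ σ) i
  exact h1.sub h2

lemma qv_hasDerivAt {x : ℝ → EuclideanSpace ℝ (Fin 2)} (hd' : Differentiable ℝ (deriv x))
    (i : Fin 2) (τ σ : ℝ) :
    HasDerivAt (fun σ' => qvF x i (τ, σ'))
      (((-1/2 : ℝ) • deriv (deriv x) ((τ - σ)/2)) i) σ :=
  hasDerivAt_coord (hda_minus hd' τ σ) i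


variable {x : ℝ → EuclideanSpace ℝ (Fin 2)}

lemma hprojc (i : Fin 2) : ContDiff ℝ ee (fun y : EuclideanSpace ℝ (Fin 2) => y i) :=
  (EuclideanSpace.proj (𝕜 := ℝ) i).contDiff

lemma qcF_contDiff (hx : ContDiff ℝ ee x) (i : Fin 2) : ContDiff ℝ ee (qcF x i) := by
  have hsp : ContDiff ℝ ee (fun p : ℝ × ℝ => (p.1 + p.2) / 2) :=
    (contDiff_fst.add contDiff_snd).div_const 2
  have hsm : ContDiff ℝ ee (fun p : ℝ × ℝ => (p.1 - p.2) / 2) :=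
    (contDiff_fst.sub contDiff_snd).div_const 2
  exact ((hprojc i).comp (hx.comp hsp)).sub ((hprojc i).comp (hx.comp hsm))

lemma qvF_contDiff (hx' : ContDiff ℝ ee (deriv x)) (i : Fin 2) : ContDiff ℝ ee (qvF x i) := by
  have hsm : ContDiff ℝ ee (fun p : ℝ × ℝ => (p.1 - p.2) / 2) :=
    (contDiff_fst.sub contDiff_snd).div_const 2
  exact (hprojc i).comp (hx'.comp hsm)

lemma AF_contDiff (hx : ContDiff ℝ ee x) (hx' : ContDiff ℝ ee (deriv x)) :
    ContDiff ℝ ee (AF x) :=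
  (((qvF_contDiff hx' 1).neg).mul (qcF_contDiff hx 0)).add
    ((qvF_contDiff hx' 0).mul (qcF_contDiff hx 1))

lemma BF_contDiff (hx : ContDiff ℝ ee x) : ContDiff ℝ ee (BF x) :=
  ((qcF_contDiff hx 0).pow 2).add ((qcF_contDiff hx 1).pow 2)

lemma qcF_per (hper : Function.Periodic x 1) (i : Fin 2) (p : ℝ × ℝ) :
    qcF x i ((2, 0) + p) = qcF x i p := by
  have h1 : (((2, 0) + p : ℝ × ℝ).1 + ((2, 0) + p : ℝ × ℝ).2) / 2 = (p.1 + p.2) / 2 + 1 := by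
    simp [Prod.fst_add, Prod.snd_add]; ring
  have h2 : (((2, 0) + p : ℝ × ℝ).1 - ((2, 0) + p : ℝ × ℝ).2) / 2 = (p.1 - p.2) / 2 + 1 := by
    simp [Prod.fst_add, Prod.snd_add]; ring
  simp only [qcF, h1, h2, hper ((p.1 + p.2) / 2), hper ((p.1 - p.2) / 2)]

lemma qvF_per (hper' : Function.Periodic (deriv x) 1) (i : Fin 2) (p : ℝ × ℝ) :
    qvF x i ((2, 0) + p) = qvF x i p := by
  have h2 : (((2, 0) + p : ℝ × ℝ).1 - ((2, 0) + p : ℝ × ℝ).2) / 2 = (p.1 - p.2) / 2 + 1 := by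
    simp [Prod.fst_add, Prod.snd_add]; ring
  simp only [qvF, h2, hper' ((p.1 - p.2) / 2)]

lemma AF_per (hper : Function.Periodic x 1) (hper' : Function.Periodic (deriv x) 1)
    (p : ℝ × ℝ) : AF x ((2, 0) + p) = AF x p := by
  simp only [AF, qcF_per hper, qvF_per hper']

lemma BF_per (hper : Function.Periodic x 1) (p : ℝ × ℝ) : BF x ((2, 0) + p) = BF x p := by
  simp only [BF, qcF_per hper]

lemma qcF_zero (i : Fin 2) (τ : ℝ) : qcF x i (τ, 0) = 0 := by
  simp [qcF]

lemma AF_zero (τ : ℝ) : AF x (τ, 0) = 0 := by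
  simp [AF, qcF_zero]

lemma BF_zero (τ : ℝ) : BF x (τ, 0) = 0 := by
  simp [BF, qcF_zero]

lemma AF_deriv_zero (hd : Differentiable ℝ x) (hd' : Differentiable ℝ (deriv x)) (τ : ℝ) :
    deriv (fun σ' => AF x (τ, σ')) 0 = 0 := by
  have hc0 := qc_hasDerivAt hd 0 τ 0
  have hc1 := qc_hasDerivAt hd 1 τ 0
  have hv0 := qv_hasDerivAt hd' 0 τ 0
  have hv1 := qv_hasDerivAt hd' 1 τ 0
  have hAd := ((hv1.neg.mul hc0)).add (hv0.mul hc1)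
  have hAd' : HasDerivAt (fun σ' => AF x (τ, σ')) _ 0 := hAd
  rw [hAd'.deriv]
  simp only [qcF_zero, qvF, PiLp.smul_apply, smul_eq_mul]
  norm_num
  ring

lemma BF_deriv_zero (hd : Differentiable ℝ x) (τ : ℝ) :
    deriv (fun σ' => BF x (τ, σ')) 0 = 0 := by
  have hc0 := qc_hasDerivAt hd 0 τ 0
  have hc1 := qc_hasDerivAt hd 1 τ 0
  have hBd := (hc0.pow 2).add (hc1.pow 2)
  have hBd' : HasDerivAt (fun σ' => BF x (τ, σ')) _ 0 := hBd
  rw [hBd'.deriv]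
  simp [qcF_zero]

lemma BF_norm (τ σ : ℝ) : BF x (τ, σ) = ‖x ((τ + σ)/2) - x ((τ - σ)/2)‖ ^ 2 := by
  have h1 : ‖x ((τ + σ)/2) - x ((τ - σ)/2)‖
      = Real.sqrt (qcF x 0 (τ, σ) ^ 2 + qcF x 1 (τ, σ) ^ 2) := by
    rw [EuclideanSpace.norm_eq]
    congr 1
    simp [Fin.sum_univ_two, sq_abs, qcF]
  rw [h1, Real.sq_sqrt (by positivity)]
  rfl

end
end Stmt14Aux


open scoped RealInnerProductSpace

open Stmt14Aux in
/-- Derivatives in `σ = s − t` (with `τ = s + t` fixed) of the normal component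
`(ẋ(t))^⊥ · r` of the unit chord of a smooth regular closed curve: the `n`-th
`σ`-derivative is `O(σ^{1−n})` for `0 < σ` small. -/
theorem stmt14 (x : ℝ → EuclideanSpace ℝ (Fin 2))
    (hx : ContDiff ℝ (⊤ : ℕ∞) x) (hper : Function.Periodic x 1)
    (hreg : ∀ t : ℝ, deriv x t ≠ 0)
    (hinj : ∀ s t : ℝ, x s = x t → ∃ m : ℤ, s = t + (m : ℝ)) :
    ∀ n : ℕ, ∃ C > 0, ∃ σ0 > 0, ∀ τ σ : ℝ, 0 < σ → σ ≤ σ0 →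
      |iteratedDeriv n (fun σ' : ℝ =>
          (-(deriv x ((τ - σ') / 2)) 1 *
              ((‖x ((τ + σ') / 2) - x ((τ - σ') / 2)‖)⁻¹ •
                (x ((τ + σ') / 2) - x ((τ - σ') / 2))) 0 +
            (deriv x ((τ - σ') / 2)) 0 *
              ((‖x ((τ + σ') / 2) - x ((τ - σ') / 2)‖)⁻¹ •
                (x ((τ + σ') / 2) - x ((τ - σ') / 2))) 1)) σ| ≤
        C * σ ^ ((1:ℝ) - n) := by
  intro n
  have hxs : ContDiff ℝ ee x := hx.of_le (by simp)
  have hd : Differentiable ℝ x := hxs.differentiable ee_ne_zero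
  have hx' : ContDiff ℝ ee (deriv x) := (contDiff_infty_iff_deriv.mp hxs).2
  have hd' : Differentiable ℝ (deriv x) := hx'.differentiable ee_ne_zero
  have hper' : Function.Periodic (deriv x) 1 := periodic_deriv hd hper
  obtain ⟨σ1, c, hσ1, hσ11, hc, hchord⟩ := chord_lb hxs hper hreg
  obtain ⟨MA, hMA0, hMA⟩ := slice_bound (AF x) (AF_contDiff hxs hx') (AF_per hper hper') (n + 3)
  obtain ⟨MB, hMB0, hMB⟩ := slice_bound (BF x) (BF_contDiff hxs) (BF_per hper) (n + 3)
  have hTA : ∀ τ : ℝ, ∀ σ ∈ Ioo (0:ℝ) σ1, ∀ j ≤ n,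
      |iteratedDeriv j (fun σ' => AF x (τ, σ')) σ| ≤ MA * σ ^ ((2:ℤ) - j) := by
    intro τ
    have haC : ContDiff ℝ ee (fun σ' : ℝ => AF x (τ, σ')) :=
      (AF_contDiff hxs hx').comp (contDiff_const.prodMk contDiff_id)
    refine taylor_bnd haC (AF_zero τ) (AF_deriv_zero hd hd' τ) hσ1 hσ11 hMA0 n ?_
    intro k hk σ hσ
    exact hMA k (by omega) τ σ hσ
  have hTB : ∀ τ : ℝ, ∀ σ ∈ Ioo (0:ℝ) σ1, ∀ j ≤ n + 1,
      |iteratedDeriv j (fun σ' => BF x (τ, σ')) σ| ≤ MB * σ ^ ((2:ℤ) - j) := by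
    intro τ
    have hbC : ContDiff ℝ ee (fun σ' : ℝ => BF x (τ, σ')) :=
      (BF_contDiff hxs).comp (contDiff_const.prodMk contDiff_id)
    refine taylor_bnd hbC (BF_zero τ) (BF_deriv_zero hd τ) hσ1 hσ11 hMB0 (n + 1) ?_
    intro k hk σ hσ
    exact hMB k (by omega) τ σ hσ
  have hBlow : ∀ τ : ℝ, ∀ σ ∈ Ioo (0:ℝ) σ1, c ^ 2 * σ ^ 2 ≤ BF x (τ, σ) := by
    intro τ σ hσ
    have harg : (τ - σ)/2 + σ = (τ + σ)/2 := by ring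
    have h1 := hchord ((τ - σ)/2) σ hσ.1.le hσ.2.le
    rw [harg] at h1
    have h2 : (c * σ) ^ 2 ≤ ‖x ((τ + σ)/2) - x ((τ - σ)/2)‖ ^ 2 :=
      pow_le_pow_left₀ (mul_nonneg hc.le hσ.1.le) h1 2
    rw [BF_norm]
    calc c ^ 2 * σ ^ 2 = (c * σ) ^ 2 := by ring
      _ ≤ _ := h2
  obtain ⟨CG, hCG0, hCG⟩ := bnd_inv_sqrt (pow_pos hc 2) hMB0 n n (le_refl n)
  refine ⟨2 ^ n * MA * CG, mul_pos (mul_pos (pow_pos two_pos n) hMA0) hCG0, σ1 / 2, half_pos hσ1, ?_⟩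
  intro τ σ hσ0 hσσ0
  have hσmem : σ ∈ Ioo (0:ℝ) σ1 := ⟨hσ0, lt_of_le_of_lt hσσ0 (by linarith)⟩
  set a : ℝ → ℝ := fun σ' => AF x (τ, σ') with hadef
  set b : ℝ → ℝ := fun σ' => BF x (τ, σ') with hbdef
  set g : ℝ → ℝ := fun σ' => (Real.sqrt (b σ'))⁻¹ with hgdef
  have hbOn : ContDiffOn ℝ ee b (Ioo 0 σ1) :=
    ((BF_contDiff hxs).comp (contDiff_const.prodMk contDiff_id)).contDiffOn
  have haOn : ContDiffOn ℝ ee a (Ioo 0 σ1) :=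
    ((AF_contDiff hxs hx').comp (contDiff_const.prodMk contDiff_id)).contDiffOn
  have hbpos : ∀ σ' ∈ Ioo (0:ℝ) σ1, c ^ 2 * σ' ^ 2 ≤ b σ' := fun σ' hσ' => hBlow τ σ' hσ'
  have hgbd := hCG hbOn hbpos (hTB τ)
  have hgOn : ContDiffOn ℝ ee g (Ioo 0 σ1) := by
    have hbp : ∀ σ' ∈ Ioo (0:ℝ) σ1, 0 < b σ' := by
      intro σ' hσ'
      have := hBlow τ σ' hσ'
      nlinarith [pow_pos hσ'.1 2, pow_pos hc 2]
    have hsq : ContDiffOn ℝ ee (fun t => Real.sqrt (b t)) (Ioo 0 σ1) := fun σ' hσ' =>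
      (Real.contDiffAt_sqrt (hbp σ' hσ').ne').comp_contDiffWithinAt σ' (hbOn σ' hσ')
    exact hsq.inv fun σ' hσ' => (Real.sqrt_pos.mpr (hbp σ' hσ')).ne'
  have hmul := bnd_mul hMA0.le hCG0.le haOn hgOn (hTA τ) hgbd σ hσmem n (le_refl n)
  have hev : (fun σ' : ℝ =>
          (-(deriv x ((τ - σ') / 2)) 1 *
              ((‖x ((τ + σ') / 2) - x ((τ - σ') / 2)‖)⁻¹ •
                (x ((τ + σ') / 2) - x ((τ - σ') / 2))) 0 +
            (deriv x ((τ - σ') / 2)) 0 *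
              ((‖x ((τ + σ') / 2) - x ((τ - σ') / 2)‖)⁻¹ •
                (x ((τ + σ') / 2) - x ((τ - σ') / 2))) 1))
      =ᶠ[nhds σ] fun σ' => a σ' * g σ' := by
    filter_upwards [isOpen_Ioo.mem_nhds hσmem] with σ' hσ'
    have hsb : Real.sqrt (b σ') = ‖x ((τ + σ')/2) - x ((τ - σ')/2)‖ := by
      show Real.sqrt (BF x (τ, σ')) = _
      rw [BF_norm]
      exact Real.sqrt_sq (norm_nonneg _)
    show _ = a σ' * g σ'
    simp only [hadef, hgdef, hsb, AF, qcF, qvF, PiLp.smul_apply, smul_eq_mul, PiLp.sub_apply]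
    ring
  rw [Filter.EventuallyEq.iteratedDeriv_eq n hev]
  have hrpow : σ ^ ((1:ℝ) - n) = σ ^ ((2:ℤ) + -1 - n) := by
    rw [show ((1:ℝ) - n) = (((2 + -1 - n : ℤ)) : ℝ) by push_cast; ring, Real.rpow_intCast]
  rw [hrpow]
  exact hmul
end

section
/- Let x : [0,1] → ℝ² be a C^∞ regular closed curve satisfying ‖x(s) − x(t)‖ ≥ D |e^{2πis} − e^{2πit}| for some D > 0, and let φ(s,t) = ‖x(s) − x(t)‖. Then there exist constants C₁, C₂ > 0 such that whenever 0 < d(s,t) ≤ C₁ (where d(s,t) = |e^{2πis} − e^{2πit}|), one has max(|ẋ(s)·r|, |ẋ(t)·r|) ≥ C₂, where r = (x(s)−x(t))/‖x(s)−x(t)‖. In particular ‖∇φ(s,t)‖_∞ ≥ C₂ near the diagonal. -/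
open Real

lemma stmt15_abs_exp (s t : ℝ) :
    ‖(Complex.exp (2 * Real.pi * Complex.I * s) -
      Complex.exp (2 * Real.pi * Complex.I * t))‖ = 2 * |Real.sin (Real.pi * (s - t))| := by
  have h1 : (2 * (Real.pi:ℂ) * Complex.I * s) =
      (↑(Real.pi * (s+t)) * Complex.I + ↑(Real.pi * (s-t)) * Complex.I) := by push_cast; ring
  have h2 : (2 * (Real.pi:ℂ) * Complex.I * t) =
      (↑(Real.pi * (s+t)) * Complex.I + ↑(-(Real.pi * (s-t))) * Complex.I) := by push_cast; ring
  rw [h1, h2, Complex.exp_add, Complex.exp_add]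
  have key : Complex.exp (↑(Real.pi * (s+t)) * Complex.I) * Complex.exp (↑(Real.pi*(s-t)) * Complex.I)
      - Complex.exp (↑(Real.pi * (s+t)) * Complex.I) * Complex.exp (↑(-(Real.pi*(s-t))) * Complex.I)
      = Complex.exp (↑(Real.pi * (s+t)) * Complex.I) * (2 * ↑(Real.sin (Real.pi*(s-t))) * Complex.I) := by
    simp only [Complex.exp_mul_I]
    push_cast
    simp only [Complex.cos_neg, Complex.sin_neg]
    ring
  rw [key, norm_mul, Complex.norm_exp_ofReal_mul_I, one_mul, norm_mul, norm_mul,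
    Complex.norm_I, Complex.norm_real, Real.norm_eq_abs, Complex.norm_two, mul_one]

lemma stmt15_jordan {u : ℝ} (h : |u| ≤ 1/2) : 2 * |u| ≤ |Real.sin (Real.pi * u)| := by
  have hpi := Real.pi_pos
  rcases le_or_gt 0 u with hu | hu
  · have h1 : Real.pi * u ≤ Real.pi / 2 := by
      rw [abs_of_nonneg hu] at h; nlinarith
    have := Real.mul_le_sin (x := Real.pi * u) (by positivity) h1
    have h2 : 2 / Real.pi * (Real.pi * u) = 2 * u := by field_simp
    rw [abs_of_nonneg hu]
    calc 2 * u = 2 / Real.pi * (Real.pi * u) := h2.symm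
      _ ≤ Real.sin (Real.pi * u) := this
      _ ≤ |Real.sin (Real.pi * u)| := le_abs_self _
  · have h1 : Real.pi * (-u) ≤ Real.pi / 2 := by
      rw [abs_of_neg hu] at h; nlinarith
    have := Real.mul_le_sin (x := Real.pi * (-u)) (by nlinarith) h1
    have h2 : 2 / Real.pi * (Real.pi * (-u)) = 2 * (-u) := by field_simp
    rw [abs_of_neg hu]
    calc 2 * (-u) = 2 / Real.pi * (Real.pi * (-u)) := h2.symm
      _ ≤ Real.sin (Real.pi * (-u)) := this
      _ = -Real.sin (Real.pi * u) := by rw [mul_neg, Real.sin_neg]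
      _ ≤ |Real.sin (Real.pi * u)| := neg_le_abs _

lemma stmt15_round (θ : ℝ) : 4 * |θ - round θ| ≤ 2 * |Real.sin (Real.pi * θ)| := by
  have h1 : |θ - round θ| ≤ 1/2 := abs_sub_round θ
  have h2 := stmt15_jordan h1
  have h3 : Real.sin (Real.pi * θ) = (-1 : ℝ) ^ (round θ) * Real.sin (Real.pi * (θ - round θ)) := by
    have : Real.pi * θ = Real.pi * (θ - round θ) + (round θ : ℤ) * Real.pi := by ring
    rw [this, Real.sin_add_int_mul_pi, mul_comm]
  rw [h3, abs_mul]
  have h4 : |((-1 : ℝ)) ^ (round θ)| = 1 := by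
    rcases Int.even_or_odd (round θ) with he | ho
    · rw [he.neg_one_zpow]; simp
    · rw [Odd.neg_one_zpow ho]; simp
  rw [h4, one_mul]
  linarith

/-- Near the diagonal there are no near-stationary phase points: for a smooth,
regular, geometrically regular closed curve, the chord `r` makes a bounded-away-
from-zero tangential component with at least one of the two tangents whenever
`0 < d(s,t) ≤ C₁`, where `d(s,t) = |e^{2πis} − e^{2πit}|`. -/
theorem stmt15 (x : ℝ → EuclideanSpace ℝ (Fin 2))
    (hx : ContDiff ℝ (⊤ : ℕ∞) x) (hper : Function.Periodic x 1)
    (hreg : ∀ t : ℝ, deriv x t ≠ 0)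
    (D : ℝ) (hD : 0 < D)
    (hgeom : ∀ s t : ℝ,
      D * ‖(Complex.exp (2 * Real.pi * Complex.I * s) -
          Complex.exp (2 * Real.pi * Complex.I * t))‖ ≤ ‖x s - x t‖) :
    ∃ C₁ > 0, ∃ C₂ > 0, ∀ s t : ℝ,
      0 < ‖(Complex.exp (2 * Real.pi * Complex.I * s) -
            Complex.exp (2 * Real.pi * Complex.I * t))‖ →
      ‖(Complex.exp (2 * Real.pi * Complex.I * s) -
            Complex.exp (2 * Real.pi * Complex.I * t))‖ ≤ C₁ →
      C₂ ≤ max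
        |(inner ℝ (deriv x s) ((‖x s - x t‖)⁻¹ • (x s - x t)) : ℝ)|
        |(inner ℝ (deriv x t) ((‖x s - x t‖)⁻¹ • (x s - x t)) : ℝ)| := by
  have hdc : Continuous (deriv x) := hx.continuous_deriv (by simp)
  have hdiff : Differentiable ℝ x := hx.differentiable (by simp)
  have hxper : ∀ (u : ℝ) (n : ℤ), x (u + n) = x u := by
    intro u n; simpa using (hper.int_mul n) u
  have hdper : ∀ (u : ℝ) (n : ℤ), deriv x (u + n) = deriv x u := by
    intro u n
    have hfun : (fun v : ℝ => x (v + (n:ℝ))) = x := funext fun v => hxper v n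
    calc deriv x (u + n) = deriv (fun v : ℝ => x (v + (n:ℝ))) u :=
          (deriv_comp_add_const (f := x) (a := (n:ℝ)) (x := u)).symm
      _ = deriv x u := by rw [hfun]
  have hdper' : ∀ (u : ℝ) (n : ℤ), deriv x (u - n) = deriv x u := by
    intro u n
    have := hdper (u - n) n
    rw [sub_add_cancel] at this
    exact this.symm
  have hxper2 : ∀ (u : ℝ) (n : ℤ), x (u + n) = x u := hxper
  -- min and max of ‖deriv x‖
  obtain ⟨u₀, hu₀mem, hu₀'⟩ := isCompact_Icc.exists_isMinOn (Set.nonempty_Icc.mpr zero_le_one)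
    (hdc.norm.continuousOn (s := Set.Icc (0:ℝ) 1))
  obtain ⟨u₁, hu₁mem, hu₁'⟩ := isCompact_Icc.exists_isMaxOn (Set.nonempty_Icc.mpr zero_le_one)
    (hdc.norm.continuousOn (s := Set.Icc (0:ℝ) 1))
  have hu₀ := isMinOn_iff.mp hu₀'
  have hu₁ := isMaxOn_iff.mp hu₁'
  set m := ‖deriv x u₀‖ with hm
  set M := ‖deriv x u₁‖ with hM
  have hmpos : 0 < m := norm_pos_iff.mpr (hreg u₀)
  have hMpos : 0 < M := lt_of_lt_of_le hmpos (hu₁ u₀ hu₀mem)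
  have hmle : ∀ u : ℝ, m ≤ ‖deriv x u‖ := by
    intro u
    have h1 := Int.floor_le u
    have h2 := Int.lt_floor_add_one u
    rw [← hdper' u ⌊u⌋]
    exact hu₀ _ ⟨by linarith, by linarith⟩
  have hMle : ∀ u : ℝ, ‖deriv x u‖ ≤ M := by
    intro u
    have h1 := Int.floor_le u
    have h2 := Int.lt_floor_add_one u
    rw [← hdper' u ⌊u⌋]
    exact hu₁ _ ⟨by linarith, by linarith⟩
  set ε := m^2 / (2*M) with hε
  have hεpos : 0 < ε := by positivity
  have hεM : ε * M = m^2/2 := by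
    rw [hε]; field_simp
  -- uniform continuity
  have huc := (isCompact_Icc (a := (-1:ℝ)) (b := 2)).uniformContinuousOn_of_continuous
    hdc.continuousOn
  rw [Metric.uniformContinuousOn_iff] at huc
  obtain ⟨δ, hδpos, hδ⟩ := huc ε hεpos
  set δ' := min δ (1/2) with hδ'
  have hδ'pos : 0 < δ' := lt_min hδpos (by norm_num)
  have hδ'le : δ' ≤ 1/2 := min_le_right _ _
  have hUC : ∀ a b : ℝ, |a - b| < δ' → ‖deriv x a - deriv x b‖ ≤ ε := by
    intro a b hab
    have hfa := Int.floor_le a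
    have hfa' := Int.lt_floor_add_one a
    have habs := abs_lt.mp hab
    rw [← hdper' a ⌊a⌋, ← hdper' b ⌊a⌋, ← dist_eq_norm]
    refine le_of_lt (hδ _ ⟨by linarith, by linarith⟩ _ ⟨by linarith, by linarith⟩ ?_)
    rw [Real.dist_eq, show a - ⌊a⌋ - (b - ⌊a⌋) = a - b by ring]
    exact lt_of_lt_of_le hab (min_le_left _ _)
  refine ⟨2*δ', by positivity, ε, hεpos, fun s t hd0 hdC₁ => ?_⟩
  have hnpos : 0 < ‖x s - x t‖ := lt_of_lt_of_le (mul_pos hD hd0) (hgeom s t)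
  set n : ℤ := round (s - t) with hn
  set u := s - t - n with hu
  have hu4 : 4 * |u| ≤ 2*δ' := by
    have h5 := stmt15_round (s - t)
    rw [← stmt15_abs_exp s t] at h5
    exact le_trans h5 hdC₁
  have huδ : |u| < δ' := by
    have := abs_nonneg u
    linarith
  set t' := t + (n:ℝ) with ht'
  have hst' : s - t' = u := by rw [ht', hu]; ring
  have hxt' : x t' = x t := hxper t n
  set v := deriv x s with hv
  have hcont_integrand : Continuous (fun w => (inner ℝ v (deriv x w) : ℝ)) :=
    continuous_const.inner hdc
  -- pointwise bound on the inner product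
  have hpt : ∀ w ∈ Set.uIcc t' s, m^2/2 ≤ (inner ℝ v (deriv x w) : ℝ) := by
    intro w hw
    have hws : |w - s| ≤ |u| := by
      rw [← hst', abs_sub_comm s t']
      have habs1 := le_abs_self (t' - s)
      have habs2 := neg_abs_le (t' - s)
      have habs3 := abs_nonneg (t' - s)
      rw [Set.mem_uIcc] at hw
      rw [abs_le]
      rcases hw with ⟨h1, h2⟩ | ⟨h1, h2⟩ <;> constructor <;> linarith
    have hwε : ‖deriv x w - v‖ ≤ ε := hUC w s (lt_of_le_of_lt hws huδ)
    have hinner : (inner ℝ v (deriv x w) : ℝ) = ‖v‖^2 + (inner ℝ v (deriv x w - v) : ℝ) := by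
      rw [inner_sub_right, real_inner_self_eq_norm_sq]; ring
    have h2 : |(inner ℝ v (deriv x w - v) : ℝ)| ≤ M * ε :=
      le_trans (abs_real_inner_le_norm _ _)
        (mul_le_mul (hMle s) hwε (norm_nonneg _) (le_of_lt hMpos))
    have h3 : m^2 ≤ ‖v‖^2 := by nlinarith [hmle s, norm_nonneg v]
    have h4 : M * ε = m^2/2 := by rw [mul_comm]; exact hεM
    have h5 := (abs_le.mp h2).1
    rw [hinner]
    linarith
  -- the fundamental theorem of calculus identity
  have hA : (inner ℝ v (x s - x t') : ℝ) = ∫ w in t'..s, (inner ℝ v (deriv x w) : ℝ) := by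
    rw [inner_sub_right]
    have h6 := intervalIntegral.integral_eq_sub_of_hasDerivAt
      (f := fun w => (inner ℝ v (x w) : ℝ)) (f' := fun w => (inner ℝ v (deriv x w) : ℝ))
      (a := t') (b := s) ?_ ?_
    · rw [h6]
    · intro w _
      have h1 : HasDerivAt x (deriv x w) w := (hdiff w).hasDerivAt
      have h2 : HasDerivAt (fun _ : ℝ => v) 0 w := hasDerivAt_const w v
      have := HasDerivAt.inner ℝ h2 h1
      simpa using this
    · exact hcont_integrand.intervalIntegrable _ _
  have hconst : IntervalIntegrable (fun _ : ℝ => m^2/2) MeasureTheory.volume t' s :=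
    intervalIntegrable_const
  have hcint : IntervalIntegrable (fun w => (inner ℝ v (deriv x w) : ℝ)) MeasureTheory.volume t' s :=
    hcont_integrand.intervalIntegrable _ _
  have hAb : m^2/2 * |s - t'| ≤ |(inner ℝ v (x s - x t') : ℝ)| := by
    rcases le_total t' s with hle | hle
    · have h5 : (∫ _ in t'..s, (m^2/2 : ℝ)) ≤ ∫ w in t'..s, (inner ℝ v (deriv x w) : ℝ) :=
        intervalIntegral.integral_mono_on hle hconst hcint
          (fun w hw => hpt w (by rwa [Set.uIcc_of_le hle]))
      rw [intervalIntegral.integral_const] at h5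
      rw [hA]
      calc m^2/2 * |s - t'| = (s - t') • (m^2/2) := by
            rw [abs_of_nonneg (by linarith), smul_eq_mul]; ring
        _ ≤ ∫ w in t'..s, (inner ℝ v (deriv x w) : ℝ) := h5
        _ ≤ |∫ w in t'..s, (inner ℝ v (deriv x w) : ℝ)| := le_abs_self _
    · have h5 : (∫ _ in s..t', (m^2/2 : ℝ)) ≤ ∫ w in s..t', (inner ℝ v (deriv x w) : ℝ) :=
        intervalIntegral.integral_mono_on hle hconst.symm hcint.symm
          (fun w hw => hpt w (by rw [Set.uIcc_comm]; rwa [Set.uIcc_of_le hle]))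
      rw [intervalIntegral.integral_const] at h5
      rw [hA]
      calc m^2/2 * |s - t'| = (t' - s) • (m^2/2) := by
            rw [abs_of_nonpos (by linarith), smul_eq_mul]; ring
        _ ≤ ∫ w in s..t', (inner ℝ v (deriv x w) : ℝ) := h5
        _ ≤ |∫ w in s..t', (inner ℝ v (deriv x w) : ℝ)| := le_abs_self _
        _ = |∫ w in t'..s, (inner ℝ v (deriv x w) : ℝ)| := by
            rw [intervalIntegral.integral_symm s t', abs_neg]
  have hxint : x s - x t' = ∫ w in t'..s, deriv x w :=
    (intervalIntegral.integral_eq_sub_of_hasDerivAt (fun w _ => (hdiff w).hasDerivAt)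
      (hdc.intervalIntegrable _ _)).symm
  have hnormb : ‖x s - x t'‖ ≤ M * |s - t'| := by
    rw [hxint]
    exact intervalIntegral.norm_integral_le_of_norm_le_const (fun w _ => hMle w)
  have hkey : ε * ‖x s - x t‖ ≤ |(inner ℝ v (x s - x t) : ℝ)| := by
    have h6 : ‖x s - x t‖ = ‖x s - x t'‖ := by rw [hxt']
    have h7 : (inner ℝ v (x s - x t) : ℝ) = (inner ℝ v (x s - x t') : ℝ) := by rw [hxt']
    rw [h6, h7]
    calc ε * ‖x s - x t'‖ ≤ ε * (M * |s - t'|) := by nlinarith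
      _ = m^2/2 * |s - t'| := by rw [← hεM]; ring
      _ ≤ _ := hAb
  refine le_trans ?_ (le_max_left _ _)
  rw [real_inner_smul_right, abs_mul, abs_of_nonneg (inv_nonneg.mpr (norm_nonneg _))]
  rw [le_inv_mul_iff₀ hnpos]
  calc ‖x s - x t‖ * ε = ε * ‖x s - x t‖ := mul_comm _ _
    _ ≤ _ := hkey
end
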